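/- arXiv:1301.2852 — 9 statements merged into one kernel-verified Lean document; each statement's English description precedes it below -/
import Mathlib

section
/- Let X be a real Banach space, let f : X → ℝ be quasiconvex and densely continuous, and let m ∈ ℝ be the topological essential infimum of f. If F'_m = {x ∈ X : f(x) ≤ m} is meager, then F'_m is nowhere dense. -/
open Filter Topology Set MeasureTheory

/-- `f` is quasiconvex: `f (l•x + (1-l)•y) ≤ max (f x) (f y)` for `l ∈ [0,1]`. -/
def QuasiconvexFun {X : Type*} [AddCommGroup X] [Module ℝ X] (f : X → ℝ) : Prop :=
  ∀ x y : X, ∀ l : ℝ, l ∈ Set.Icc (0 : ℝ) 1 →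
    f (l • x + (1 - l) • y) ≤ max (f x) (f y)

/-- `f` is strictly quasiconvex. -/
def StrictlyQuasiconvexFun {X : Type*} [AddCommGroup X] [Module ℝ X] (f : X → ℝ) : Prop :=
  ∀ x y : X, x ≠ y → ∀ l : ℝ, l ∈ Set.Ioo (0 : ℝ) 1 →
    f (l • x + (1 - l) • y) < max (f x) (f y)

/-- `f` is densely continuous: its set of points of continuity is dense. -/
def DenselyContinuous {X : Type*} [TopologicalSpace X] (f : X → ℝ) : Prop :=
  Dense {x : X | ContinuousAt f x}

/-- `m` is the topological essential infimum of `f`: the strict sublevel set `{f < α}`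
is meager for `α < m` and nonmeager for `α > m`. -/
def IsTopEssInf {X : Type*} [TopologicalSpace X] (f : X → ℝ) (m : ℝ) : Prop :=
  (∀ α : ℝ, α < m → IsMeagre {x : X | f x < α}) ∧
  (∀ α : ℝ, m < α → ¬ IsMeagre {x : X | f x < α})

/-- Aronszajn null set: a Borel set `N` such that for every sequence `ξ` with dense linear
span, `N` decomposes as a countable union of Borel sets, the `n`-th of which has Lebesgue
null intersection with every line of direction `ξ n`. -/
def AronszajnNull {X : Type*} [NormedAddCommGroup X] [NormedSpace ℝ X]
    [MeasurableSpace X] (N : Set X) : Prop :=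
  MeasurableSet N ∧
  ∀ ξ : ℕ → X, Dense (Submodule.span ℝ (Set.range ξ) : Set X) →
    ∃ Nn : ℕ → Set X, N = ⋃ n, Nn n ∧
      ∀ n, MeasurableSet (Nn n) ∧
        ∀ x : X, MeasureTheory.volume {t : ℝ | x + t • ξ n ∈ Nn n} = 0

/-- Haar null set: `E` is contained in a Borel set `B` for which there is a Borel
probability measure vanishing on all translates of `B`. -/
def HaarNull {X : Type*} [AddCommGroup X] [TopologicalSpace X]
    [MeasurableSpace X] (E : Set X) : Prop :=
  ∃ B : Set X, E ⊆ B ∧ MeasurableSet B ∧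
    ∃ μ : MeasureTheory.Measure X, MeasureTheory.IsProbabilityMeasure μ ∧
      ∀ x : X, μ ((fun y => x + y) '' B) = 0

/-- Hadamard differentiability of `f` at `x`. -/
def HadamardDiffAt {X : Type*} [NormedAddCommGroup X] [NormedSpace ℝ X]
    (f : X → ℝ) (x : X) : Prop :=
  ∃ L : X →L[ℝ] ℝ, ∀ h : X, ∀ t : ℕ → ℝ, (∀ n, t n ≠ 0) →
    Tendsto t atTop (𝓝 0) → ∀ hs : ℕ → X, Tendsto hs atTop (𝓝 h) →
      Tendsto (fun n => (f (x + t n • hs n) - f x) / t n) atTop (𝓝 (L h))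

/-- Hadamard differentiability at `x` of a function whose relevant values are those on `V`. -/
def HadamardDiffWithinAt {X : Type*} [NormedAddCommGroup X] [NormedSpace ℝ X]
    (f : X → ℝ) (V : Set X) (x : X) : Prop :=
  ∃ L : X →L[ℝ] ℝ, ∀ h : X, ∀ t : ℕ → ℝ, (∀ n, t n ≠ 0) →
    Tendsto t atTop (𝓝 0) → ∀ hs : ℕ → X, Tendsto hs atTop (𝓝 h) →
      (∀ n, x + t n • hs n ∈ V) →
      Tendsto (fun n => (f (x + t n • hs n) - f x) / t n) atTop (𝓝 (L h))

/-- Gâteaux differentiability of `f` at `x` with derivative `L`. -/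
def GateauxDiffAt {X : Type*} [NormedAddCommGroup X] [NormedSpace ℝ X]
    (f : X → ℝ) (x : X) (L : X →L[ℝ] ℝ) : Prop :=
  ∀ h : X, Tendsto (fun t : ℝ => (f (x + t • h) - f x) / t) (𝓝[≠] 0) (𝓝 (L h))

/-- Essential Gâteaux differentiability of `f` at `x`: directional derivatives exist and
are given by a continuous linear functional for a comeager (residual) set of directions
in the unit sphere. -/
def EssGateauxDiffAt {X : Type*} [NormedAddCommGroup X] [NormedSpace ℝ X]
    (f : X → ℝ) (x : X) : Prop :=
  ∃ L : X →L[ℝ] ℝ, ∃ Ω : Set (Metric.sphere (0 : X) 1), IsMeagre Ωᶜ ∧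
    ∀ h ∈ Ω, Tendsto (fun t : ℝ => (f (x + t • (h : X)) - f x) / t) (𝓝[≠] 0) (𝓝 (L (h : X)))

/-- `K` is a closed convex cone. -/
def IsClosedConvexCone {X : Type*} [NormedAddCommGroup X] [NormedSpace ℝ X] (K : Set X) : Prop :=
  IsClosed K ∧ Convex ℝ K ∧ ∀ l : ℝ, 0 ≤ l → ∀ k ∈ K, l • k ∈ K

/-- `f` is `K`-nondecreasing on `U`. -/
def KNondecreasingOn {X : Type*} [AddCommGroup X] [Module ℝ X]
    (f : X → ℝ) (K U : Set X) : Prop :=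
  ∀ u ∈ U, ∀ k ∈ K, k ≠ 0 → u + k ∈ U → f u ≤ f (u + k)

/-- Ideally convex subset: stable under infinite convex combinations of bounded sequences. -/
def IdeallyConvex {X : Type*} [NormedAddCommGroup X] [NormedSpace ℝ X] (C : Set X) : Prop :=
  ∀ (x : ℕ → X) (lam : ℕ → ℝ), (∀ n, x n ∈ C) → Bornology.IsBounded (Set.range x) →
    (∀ n, lam n ∈ Set.Icc (0 : ℝ) 1) → HasSum lam 1 →
      ∑' n, lam n • x n ∈ C

/-- `C‡`: the union, over finite dimensional subspaces `Z ⊆ X`, of the closures of `C ∩ Z`. -/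
def Ddag {X : Type*} [NormedAddCommGroup X] [NormedSpace ℝ X] (C : Set X) : Set X :=
  ⋃ (Z : Submodule ℝ X) (_ : FiniteDimensional ℝ Z), closure (C ∩ (Z : Set X))

/-- A normed space is reflexive if the canonical inclusion into its double dual is onto. -/
def IsReflexiveSpace (X : Type*) [NormedAddCommGroup X] [NormedSpace ℝ X] : Prop :=
  Function.Surjective (NormedSpace.inclusionInDoubleDual ℝ X)

/-!
At a point of continuity of `f`, a limit of points of the closed sublevel set `{f ≤ m}`
again lies in `{f ≤ m}`. Hence the closure of `{f ≤ m}` only adds points of discontinuity,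
which form a meagre set since `f` is densely continuous and its continuity points form a
`G_δ`. So the closure of `{f ≤ m}` is meagre, and by Baire's theorem it has empty interior.
-/

theorem closure_preimage_subset_union_setOf_not_continuousAt {X Y : Type*}
    [TopologicalSpace X] [TopologicalSpace Y] (f : X → Y) {t : Set Y} (ht : IsClosed t) :
    closure (f ⁻¹' t) ⊆ f ⁻¹' t ∪ {x | ContinuousAt f x}ᶜ := by
  intro x hx
  by_cases hfx : ContinuousAt f x
  · exact Or.inl <| closure_minimal (image_preimage_subset f t) ht (mem_closure_image hfx hx)
  · exact Or.inr hfx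

theorem isMeagre_setOf_not_continuousAt {X Y : Type*} [TopologicalSpace X]
    [TopologicalSpace Y] [TopologicalSpace.PseudoMetrizableSpace Y] {f : X → Y}
    (hf : Dense {x | ContinuousAt f x}) : IsMeagre {x | ContinuousAt f x}ᶜ := by
  rw [IsMeagre, compl_compl]
  exact residual_of_dense_Gδ (IsGδ.setOfPred_continuousAt f) hf

theorem IsMeagre.isNowhereDense_of_closure_subset_union {X : Type*} [TopologicalSpace X]
    [BaireSpace X] {s t : Set X} (hs : IsMeagre s) (ht : IsMeagre t)
    (hst : closure s ⊆ s ∪ t) : IsNowhereDense s :=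
  Set.not_nonempty_iff_eq_empty.1 fun hne =>
    not_isMeagre_of_isOpen isOpen_interior hne ((hs.union ht).mono (interior_subset.trans hst))

theorem stmt_1_general {X : Type*} [NormedAddCommGroup X] [CompleteSpace X]
    (f : X → ℝ) (hd : DenselyContinuous f)
    (m : ℝ)
    (hmeagre : IsMeagre {x : X | f x ≤ m}) :
    IsNowhereDense {x : X | f x ≤ m} :=
  hmeagre.isNowhereDense_of_closure_subset_union (isMeagre_setOf_not_continuousAt hd)
    (closure_preimage_subset_union_setOf_not_continuousAt f isClosed_Iic)

/-- If `f` is quasiconvex and densely continuous on a Banach space and the sublevel set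
`{f ≤ m}` at the topological essential infimum `m` is meager, then it is nowhere dense. -/
theorem stmt_1 {X : Type*} [NormedAddCommGroup X] [NormedSpace ℝ X] [CompleteSpace X]
    (f : X → ℝ) (hq : QuasiconvexFun f) (hd : DenselyContinuous f)
    (m : ℝ) (hm : IsTopEssInf f m)
    (hmeagre : IsMeagre {x : X | f x ≤ m}) :
    IsNowhereDense {x : X | f x ≤ m} :=
  stmt_1_general f hd m hmeagre
end

section
/- Let X be a real Banach space, let f : X → ℝ be quasiconvex and densely continuous, and let m ∈ ℝ be the topological essential infimum of f. If F'_m = {x ∈ X : f(x) ≤ m} is nonmeager, then the interior of F'_m is nonempty and the boundary ∂F'_m is nowhere dense; if in addition X is separable, then ∂F'_m is Aronszajn null. -/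
open Filter Topology Set MeasureTheory

/-!
For a quasiconvex `f` every sublevel set `C = {f ≤ m}` is convex. If `C` is nonmeager, the
interior `U` of its closure is nonempty, and `U ⊆ C`: for `ε > 0`, a point of continuity of `f`
in `U` is an interior point of the convex set `{f ≤ m + ε}`, and a convex set with nonempty
interior has the same interior as its closure, which contains `U`. So `C` is a convex set with
nonempty interior. Its frontier is then the frontier of a closed set, hence nowhere dense, and
each frontier point carries a nonzero supporting functional `L`. Given directions `ξ n` with
dense span, some `L (ξ n)` is nonzero, so one of the rays `x ± t • ξ n` leaves `closure C` at a
linear rate; sorting the frontier by `n`, the sign and the rate gives closed pieces which meet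
every line of direction `ξ n` in at most one point.
-/

open Metric

section Sublevel

variable {X : Type*} [AddCommGroup X] [Module ℝ X] {f : X → ℝ}

theorem QuasiconvexFun.convex_setOf_le (hq : QuasiconvexFun f) (α : ℝ) :
    Convex ℝ {x | f x ≤ α} := by
  intro x hx y hy a b ha hb hab
  obtain rfl : b = 1 - a := by linarith
  exact (hq x y a ⟨ha, by linarith⟩).trans (max_le hx hy)

variable [TopologicalSpace X] [IsTopologicalAddGroup X] [ContinuousSMul ℝ X]

theorem QuasiconvexFun.interior_closure_setOf_le_subset (hq : QuasiconvexFun f)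
    (hd : DenselyContinuous f) (α : ℝ) :
    interior (closure {x | f x ≤ α}) ⊆ {x | f x ≤ α} := by
  intro y hy
  show f y ≤ α
  refine le_of_forall_pos_le_add fun ε hε => ?_
  obtain ⟨x, hxc, hxU⟩ := Dense.exists_mem_open hd isOpen_interior ⟨y, hy⟩
  have hfx : f x ≤ α := ContinuousWithinAt.closure_le (interior_subset hxU)
    (hxc : ContinuousAt f x).continuousWithinAt continuousWithinAt_const fun _ h => h
  have hx_int : x ∈ interior {z | f z ≤ α + ε} :=
    interior_mono (fun z (hz : f z < α + ε) => hz.le) <| mem_interior_iff_mem_nhds.2 <|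
      (hxc : ContinuousAt f x).preimage_mem_nhds (Iio_mem_nhds (by linarith))
  have hmono : interior (closure {z | f z ≤ α}) ⊆ interior (closure {z | f z ≤ α + ε}) :=
    interior_mono <| closure_mono fun z (hz : f z ≤ α) => show f z ≤ α + ε by linarith
  rw [(hq.convex_setOf_le _).interior_closure_eq_interior_of_nonempty_interior ⟨x, hx_int⟩]
    at hmono
  exact interior_subset (s := {z | f z ≤ α + ε}) (hmono hy)

theorem QuasiconvexFun.interior_setOf_le_nonempty (hq : QuasiconvexFun f)
    (hd : DenselyContinuous f) {α : ℝ} (h : ¬ IsMeagre {x | f x ≤ α}) :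
    (interior {x | f x ≤ α}).Nonempty := by
  have hU : (interior (closure {x | f x ≤ α})).Nonempty :=
    nonempty_iff_ne_empty.2 fun hnd => h (IsNowhereDense.isMeagre hnd)
  exact hU.mono (interior_maximal (hq.interior_closure_setOf_le_subset hd α) isOpen_interior)

theorem Convex.isNowhereDense_frontier {s : Set X} (hs : Convex ℝ s)
    (hne : (interior s).Nonempty) : IsNowhereDense (frontier s) := by
  have hfr : frontier s = frontier (closure s) := by
    rw [frontier, frontier, closure_closure,
      hs.interior_closure_eq_interior_of_nonempty_interior hne]
  rw [isClosed_frontier.isNowhereDense_iff, hfr, interior_frontier isClosed_closure]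

end Sublevel

section Normed

variable {X : Type*} [NormedAddCommGroup X] [NormedSpace ℝ X]

def rayEscapeSet (s : Set X) (v : X) (δ : ℝ) : Set X :=
  {x | ∀ t > 0, ∀ y ∈ s, δ * t ≤ dist (x + t • v) y}

theorem isClosed_rayEscapeSet (s : Set X) (v : X) (δ : ℝ) : IsClosed (rayEscapeSet s v δ) := by
  simp only [rayEscapeSet, ofPred_forall]
  exact isClosed_iInter fun t => isClosed_iInter fun _ => isClosed_iInter fun y =>
    isClosed_iInter fun _ => isClosed_le continuous_const (by fun_prop)

theorem subsingleton_line_inter_rayEscapeSet {s : Set X} {v : X} {δ c : ℝ} (hδ : 0 < δ)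
    (hc : c ≠ 0) (x : X) : {t : ℝ | x + t • v ∈ s ∩ rayEscapeSet s (c • v) δ}.Subsingleton := by
  have key : ∀ a b : ℝ, x + a • v ∈ s ∩ rayEscapeSet s (c • v) δ → x + b • v ∈ s →
      (b - a) / c ≤ 0 := by
    intro a b ha hb
    by_contra! hpos
    have hesc := ha.2 _ hpos _ hb
    rw [smul_smul, div_mul_cancel₀ _ hc, add_assoc, ← add_smul, add_sub_cancel, dist_self] at hesc
    nlinarith
  intro a ha b hb
  have hab := key a b ha hb.1
  have hba := key b a hb ha.1
  rw [← neg_sub, neg_div] at hba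
  have hzero : (b - a) / c = 0 := by linarith
  linarith [(div_eq_zero_iff.1 hzero).resolve_right hc]

theorem exists_nat_mem_rayEscapeSet {s : Set X} {x v : X} {L : StrongDual ℝ X} (hL : L ≠ 0)
    (hsupp : ∀ y ∈ s, L y ≤ L x) (hv : 0 < L v) :
    ∃ k : ℕ, x ∈ rayEscapeSet s v (1 / (k + 1)) := by
  have hLpos : 0 < ‖L‖ := norm_pos_iff.2 hL
  obtain ⟨k, hk⟩ := exists_nat_one_div_lt (div_pos hv hLpos)
  refine ⟨k, fun t ht y hy => ?_⟩
  rw [lt_div_iff₀ hLpos] at hk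
  have hmove : t * L v ≤ ‖L‖ * dist (x + t • v) y :=
    calc t * L v ≤ L (x + t • v) - L y := by
          rw [map_add, map_smul, smul_eq_mul]; linarith [hsupp y hy]
      _ = L (x + t • v - y) := (map_sub L _ _).symm
      _ ≤ ‖L‖ * dist (x + t • v) y := by
          rw [dist_eq_norm]; exact (le_abs_self _).trans (L.le_opNorm _)
  refine le_of_mul_le_mul_left ?_ hLpos
  nlinarith

theorem Convex.exists_ne_zero_forall_mem_closure_le {s : Set X} (hs : Convex ℝ s)
    (hne : (interior s).Nonempty) {x : X} (hx : x ∉ interior s) :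
    ∃ L : StrongDual ℝ X, L ≠ 0 ∧ ∀ y ∈ closure s, L y ≤ L x := by
  obtain ⟨L, u, hL, hLs, hLx⟩ := geometric_hahn_banach_of_nonempty_interior hs
    (convex_singleton x) (disjoint_singleton_right.2 hx) hne (singleton_nonempty x)
  exact ⟨L, hL, fun y hy => closure_minimal (fun z hz => (hLs z hz).trans (hLx x rfl))
    (isClosed_Iic.preimage L.continuous) hy⟩

theorem exists_apply_ne_zero_of_dense_span {ξ : ℕ → X}
    (hξ : Dense (Submodule.span ℝ (range ξ) : Set X)) {L : StrongDual ℝ X} (hL : L ≠ 0) :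
    ∃ n, L (ξ n) ≠ 0 := by
  by_contra! h
  exact hL (ContinuousLinearMap.ext_on hξ (by rintro _ ⟨n, rfl⟩; simpa using h n))

variable [MeasurableSpace X] [OpensMeasurableSpace X]

theorem Convex.aronszajnNull_frontier {s : Set X} (hs : Convex ℝ s)
    (hne : (interior s).Nonempty) : AronszajnNull (frontier s) := by
  refine ⟨isClosed_frontier.measurableSet, fun ξ hξ => ?_⟩
  set E : ℕ → ℕ → ℝ → Set X := fun n k c =>
    frontier s ∩ rayEscapeSet (closure s) (c • ξ n) (1 / (k + 1))
  refine ⟨fun n => ⋃ k, (E n k 1 ∪ E n k (-1)), ?_, fun n => ⟨?_, fun x => ?_⟩⟩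
  · refine Subset.antisymm (fun x hx => ?_) (iUnion_subset fun n => iUnion_subset fun k =>
      union_subset inter_subset_left inter_subset_left)
    obtain ⟨L, hL, hsupp⟩ := hs.exists_ne_zero_forall_mem_closure_le hne hx.2
    obtain ⟨n, hn⟩ := exists_apply_ne_zero_of_dense_span hξ hL
    have hescape : ∀ c : ℝ, 0 < L (c • ξ n) → ∃ k : ℕ, x ∈ E n k c := fun c hc =>
      (exists_nat_mem_rayEscapeSet hL hsupp hc).imp fun _ hk => ⟨hx, hk⟩
    simp only [mem_iUnion, mem_union]
    rcases hn.lt_or_gt with hneg | hpos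
    · obtain ⟨k, hk⟩ := hescape (-1) (by simpa using hneg)
      exact ⟨n, k, Or.inr hk⟩
    · obtain ⟨k, hk⟩ := hescape 1 (by simpa using hpos)
      exact ⟨n, k, Or.inl hk⟩
  · exact MeasurableSet.iUnion fun k =>
      ((isClosed_frontier.inter (isClosed_rayEscapeSet _ _ _)).measurableSet).union
        ((isClosed_frontier.inter (isClosed_rayEscapeSet _ _ _)).measurableSet)
  · have hline : ∀ k : ℕ, ∀ c : ℝ, c ≠ 0 → volume {t : ℝ | x + t • ξ n ∈ E n k c} = 0 :=
      fun k c hc => ((subsingleton_line_inter_rayEscapeSet Nat.one_div_pos_of_nat hc x).anti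
        fun t ht => ⟨frontier_subset_closure ht.1, ht.2⟩).measure_zero _
    simp only [mem_iUnion, mem_union, ofPred_exists, ofPred_or]
    exact measure_iUnion_null fun k =>
      measure_union_null (hline k 1 one_ne_zero) (hline k (-1) (by norm_num))

end Normed

theorem stmt_2_general {X : Type*} [NormedAddCommGroup X] [NormedSpace ℝ X]
    [MeasurableSpace X] [BorelSpace X]
    (f : X → ℝ) (hq : QuasiconvexFun f) (hd : DenselyContinuous f)
    (m : ℝ)
    (hnonmeagre : ¬ IsMeagre {x : X | f x ≤ m}) :
    (interior {x : X | f x ≤ m}).Nonempty ∧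
    IsNowhereDense (frontier {x : X | f x ≤ m}) ∧
    (TopologicalSpace.SeparableSpace X → AronszajnNull (frontier {x : X | f x ≤ m})) := by
  have hconv := hq.convex_setOf_le m
  have hint := hq.interior_setOf_le_nonempty hd hnonmeagre
  exact ⟨hint, hconv.isNowhereDense_frontier hint, fun _ => hconv.aronszajnNull_frontier hint⟩

/-- If `{f ≤ m}` is nonmeager then it has nonempty interior and nowhere dense boundary;
if moreover the space is separable, the boundary is Aronszajn null. -/
theorem stmt_2 {X : Type*} [NormedAddCommGroup X] [NormedSpace ℝ X] [CompleteSpace X]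
    [MeasurableSpace X] [BorelSpace X]
    (f : X → ℝ) (hq : QuasiconvexFun f) (hd : DenselyContinuous f)
    (m : ℝ) (hm : IsTopEssInf f m)
    (hnonmeagre : ¬ IsMeagre {x : X | f x ≤ m}) :
    (interior {x : X | f x ≤ m}).Nonempty ∧
    IsNowhereDense (frontier {x : X | f x ≤ m}) ∧
    (TopologicalSpace.SeparableSpace X → AronszajnNull (frontier {x : X | f x ≤ m})) :=
  stmt_2_general f hq hd m hnonmeagre
end

section
/- Let X be a real Banach space, let f : X → ℝ be quasiconvex and densely continuous, and let m ∈ ℝ be the topological essential infimum of f. Then X \ F'_m is semi-open, i.e., X \ F'_m is contained in the closure of its interior (equivalently, in the closure of X \ closure(F'_m)), where F'_m = {x ∈ X : f(x) ≤ m}. -/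
open Filter Topology Set MeasureTheory

/-!
If `f x > m` and `x` is not in the closure of the open set `X \ closure {f ≤ m}`, then a
neighbourhood of `x` lies in `closure {f < f x}`. Quasiconvexity gives `f (2x - y) ≥ f x`
whenever `f y < f x`, so reflecting through `x` puts a neighbourhood of `x` inside
`closure {f ≥ f x}`. At each of the densely many points of continuity there, `f > m`
holds on a whole neighbourhood, so `x` is a limit of interior points of `{f > m}`.
-/

lemma DenselyContinuous.interior_closure_subset_closure_interior {X : Type*}
    [TopologicalSpace X] {f : X → ℝ} (hd : DenselyContinuous f) {m c : ℝ} (hmc : m < c) :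
    interior (closure {z | c ≤ f z}) ⊆ closure (interior {z | m < f z}) := by
  refine (hd.open_subset_closure_inter isOpen_interior).trans (closure_mono ?_)
  rintro p ⟨hpU, hpc⟩
  have hcp : c ≤ f p := ContinuousWithinAt.closure_le (interior_subset hpU)
    continuousWithinAt_const hpc.continuousWithinAt fun _ hz => hz
  exact mem_interior_iff_mem_nhds.mpr (hpc.preimage_mem_nhds (Ioi_mem_nhds (hmc.trans_le hcp)))

lemma QuasiconvexFun.le_apply_pointReflection {X : Type*} [AddCommGroup X] [Module ℝ X]
    {f : X → ℝ} (hq : QuasiconvexFun f) {x y : X} (hy : f y < f x) :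
    f x ≤ f (Equiv.pointReflection x y) := by
  have hmid : (1 / 2 : ℝ) • Equiv.pointReflection x y + (1 - 1 / 2 : ℝ) • y = x := by
    rw [Equiv.pointReflection_apply, vsub_eq_sub, vadd_eq_add]
    module
  have h := hq (Equiv.pointReflection x y) y (1 / 2) ⟨by norm_num, by norm_num⟩
  rw [hmid] at h
  exact (le_max_iff.mp h).resolve_right hy.not_ge

lemma QuasiconvexFun.mem_interior_closure_setOf_le {X : Type*} [AddCommGroup X] [Module ℝ X]
    [TopologicalSpace X] [IsTopologicalAddGroup X] {f : X → ℝ} (hq : QuasiconvexFun f) {x : X}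
    (hx : x ∈ interior (closure {y | f y < f x})) :
    x ∈ interior (closure {y | f x ≤ f y}) := by
  let σ := Homeomorph.pointReflection x
  have hσ : {y | f y < f x} ⊆ σ ⁻¹' {y | f x ≤ f y} := fun _ hy => hq.le_apply_pointReflection hy
  have h := interior_mono (closure_mono hσ) hx
  rwa [← σ.preimage_closure, ← σ.preimage_interior, Set.mem_preimage,
    Homeomorph.coe_pointReflection, Equiv.pointReflection_self] at h

theorem stmt_3_general {X : Type*} [NormedAddCommGroup X] [NormedSpace ℝ X]
    (f : X → ℝ) (hq : QuasiconvexFun f) (hd : DenselyContinuous f)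
    (m : ℝ) :
    {x : X | f x ≤ m}ᶜ ⊆ closure (interior ({x : X | f x ≤ m}ᶜ)) := by
  intro x hx
  have hmx : m < f x := not_le.mp hx
  by_cases hint : x ∈ interior (closure {y | f y ≤ m})
  · have hsub : {y | f y ≤ m} ⊆ {y | f y < f x} := fun _ hy => hy.trans_lt hmx
    have hle := hq.mem_interior_closure_setOf_le (interior_mono (closure_mono hsub) hint)
    simpa only [compl_ofPred, not_le] using hd.interior_closure_subset_closure_interior hmx hle
  · rwa [← Set.mem_compl_iff, ← closure_compl, ← interior_compl] at hint

/-- The complement of `{f ≤ m}` is semi-open: it is contained in the closure of its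
interior. -/
theorem stmt_3 {X : Type*} [NormedAddCommGroup X] [NormedSpace ℝ X] [CompleteSpace X]
    (f : X → ℝ) (hq : QuasiconvexFun f) (hd : DenselyContinuous f)
    (m : ℝ) (hm : IsTopEssInf f m) :
    {x : X | f x ≤ m}ᶜ ⊆ closure (interior ({x : X | f x ≤ m}ᶜ)) :=
  stmt_3_general f hq hd m
end

section
/- Let X be a separable real Banach space, let f : X → ℝ be quasiconvex and densely continuous, and let m ∈ ℝ be the topological essential infimum of f. Then the set of points of X \ F'_m at which f is not continuous is contained in an Aronszajn null set, where F'_m = {x ∈ X : f(x) ≤ m}. -/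
open Filter Topology Set MeasureTheory

/-!
For rational `q > m` the closure `C q` of the convex set `{f < q}` has nonempty interior, since
`{f < q}` is not meagre. Quasiconvexity and dense continuity force `f ≤ q` on the interior of
`C q`, so a point of discontinuity `x` with `m < f x` lies on the frontier of some `C q`.

It remains to see that the frontier of a convex set `D` with `0 ∈ interior D` is Aronszajn null.
Let `ν` be its gauge and `(ξ n)` a sequence with dense span. A frontier point `p` either sees
the interior along a line `p + ℝ ξ n` (such a line contains at most two frontier points), or `ν`
has a corner at `p` in direction `ξ n` (then `t ↦ ν (x + t • ξ n)` is not differentiable, which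
by Rademacher happens on a null set of `t`), or `ν (p + t • ξ n) ≤ ν p + o(|t|)` for every `n`.
The directions with this last property form a closed subspace, so it would contain `p`,
contradicting `ν ((1 + t) • p) = 1 + t`.
-/

namespace QuasiconvexFun

variable {X : Type*} [AddCommGroup X] [Module ℝ X] {f : X → ℝ}

theorem convex_setOf_lt (hf : QuasiconvexFun f) (q : ℝ) : Convex ℝ {x | f x < q} := by
  intro x hx y hy a b ha hb hab
  obtain rfl : b = 1 - a := by linarith
  exact (hf x y a ⟨ha, by linarith⟩).trans_lt (max_lt hx hy)

variable [TopologicalSpace X] [IsTopologicalAddGroup X] [ContinuousSMul ℝ X]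

theorem le_of_mem_interior_closure (hf : QuasiconvexFun f) (hd : DenselyContinuous f) {q : ℝ}
    {x : X} (hx : x ∈ interior (closure {y | f y < q})) : f x ≤ q := by
  by_contra! hqx
  obtain ⟨u, hu, hfu⟩ := hd.inter_open_nonempty _ isOpen_interior ⟨x, hx⟩
  have hu_le : f u ≤ q := hfu.continuousWithinAt.closure_le (interior_subset hu)
    continuousWithinAt_const fun y hy => hy.le
  have hu_int : u ∈ interior {y | f y < f x} :=
    mem_interior_iff_mem_nhds.2 (hfu.eventually (gt_mem_nhds (hu_le.trans_lt hqx)))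
  have hx_int : x ∈ interior {y | f y < f x} := by
    rw [← (hf.convex_setOf_lt _).interior_closure_eq_interior_of_nonempty_interior ⟨u, hu_int⟩]
    exact interior_mono (closure_mono fun y (hy : f y < q) => hy.trans hqx) hx
  exact lt_irrefl (f x) (interior_subset (s := {y | f y < f x}) hx_int)

theorem continuousAt_of_forall_notMem_frontier (hf : QuasiconvexFun f)
    (hd : DenselyContinuous f) {m : ℝ} {x : X} (hmx : m < f x)
    (h : ∀ q : ℚ, m < q → x ∉ frontier (closure {y | f y < q})) : ContinuousAt f x := by
  refine tendsto_order.2 ⟨fun b hb => ?_, fun b hb => ?_⟩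
  · obtain ⟨q, hq, hqx⟩ := exists_rat_btwn (max_lt hb hmx)
    have hx : x ∉ closure {y | f y < q} := by
      intro hx
      refine h q ((le_max_right b m).trans_lt hq) ?_
      rw [isClosed_closure.frontier_eq]
      exact ⟨hx, fun hi => (hf.le_of_mem_interior_closure hd hi).not_gt hqx⟩
    filter_upwards [isClosed_closure.isOpen_compl.mem_nhds hx] with y hy
    exact (le_max_left b m).trans_lt (hq.trans_le (not_lt.1 fun hyq => hy (subset_closure hyq)))
  · obtain ⟨q, hxq, hq⟩ := exists_rat_btwn hb
    have hx : x ∈ interior (closure {y | f y < q}) := by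
      by_contra hx
      refine h q (hmx.trans hxq) ?_
      rw [isClosed_closure.frontier_eq]
      exact ⟨subset_closure hxq, hx⟩
    filter_upwards [isOpen_interior.mem_nhds hx] with y hy
    exact (hf.le_of_mem_interior_closure hd hy).trans_lt hq

end QuasiconvexFun

section Flatness

variable {X : Type*} [NormedAddCommGroup X] [NormedSpace ℝ X] {ν : X → ℝ} {p v w : X}

theorem Convex.convexOn_gauge {D : Set X} (hc : Convex ℝ D) (hD : Absorbent ℝ D) :
    ConvexOn ℝ univ (gauge D) :=
  ⟨convex_univ, fun x _ y _ a b ha hb _ => by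
    simpa only [gauge_smul_of_nonneg ha, gauge_smul_of_nonneg hb, smul_eq_mul]
      using gauge_add_le hc hD (a • x) (b • y)⟩

def IsFlatAlong (ν : X → ℝ) (p v : X) : Prop :=
  ∀ ε > 0, ∀ᶠ t in 𝓝 (0 : ℝ), ν (p + t • v) ≤ ν p + ε * |t|

theorem isFlatAlong_zero : IsFlatAlong ν p 0 :=
  fun ε hε => Eventually.of_forall fun t => by
    simpa only [smul_zero, add_zero] using le_add_of_nonneg_right (by positivity)

theorem IsFlatAlong.smul (h : IsFlatAlong ν p v) (c : ℝ) : IsFlatAlong ν p (c • v) := by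
  intro ε hε
  have hc : Tendsto (fun t : ℝ => t * c) (𝓝 0) (𝓝 0) := by
    simpa using (continuous_mul_const c).tendsto 0
  have hεc : ε / (|c| + 1) * |c| ≤ ε := by
    rw [div_mul_eq_mul_div, div_le_iff₀ (by positivity)]
    nlinarith [abs_nonneg c]
  filter_upwards [hc.eventually (h (ε / (|c| + 1)) (by positivity))] with t ht
  calc ν (p + t • c • v) = ν (p + (t * c) • v) := by rw [smul_smul]
    _ ≤ ν p + ε / (|c| + 1) * |t * c| := ht
    _ ≤ ν p + ε * |t| := by
      rw [abs_mul, ← mul_assoc, mul_comm _ |t|, mul_assoc]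
      nlinarith [abs_nonneg t]

theorem IsFlatAlong.add (hν : ConvexOn ℝ univ ν) (hv : IsFlatAlong ν p v)
    (hw : IsFlatAlong ν p w) : IsFlatAlong ν p (v + w) := by
  intro ε hε
  filter_upwards [hv.smul 2 ε hε, hw.smul 2 ε hε] with t hvt hwt
  have hmid : p + t • (v + w)
      = (1 / 2 : ℝ) • (p + t • (2 : ℝ) • v) + (1 / 2 : ℝ) • (p + t • (2 : ℝ) • w) := by
    module
  calc ν (p + t • (v + w))
      ≤ (1 / 2 : ℝ) • ν (p + t • (2 : ℝ) • v) + (1 / 2 : ℝ) • ν (p + t • (2 : ℝ) • w) := by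
        rw [hmid]; exact hν.2 trivial trivial (by norm_num) (by norm_num) (by norm_num)
    _ ≤ ν p + ε * |t| := by simp only [smul_eq_mul]; linarith

theorem LipschitzWith.isClosed_setOf_isFlatAlong {K : NNReal} (hν : LipschitzWith K ν) (p : X) :
    IsClosed {v | IsFlatAlong ν p v} := by
  refine isClosed_of_closure_subset fun v hv ε hε => ?_
  obtain ⟨w, hw, hvw⟩ := Metric.mem_closure_iff.1 hv (ε / (2 * (K + 1))) (by positivity)
  have hK : (K : ℝ) * dist v w ≤ ε / 2 := by
    calc (K : ℝ) * dist v w ≤ (K + 1) * (ε / (2 * (K + 1))) := by gcongr; linarith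
      _ = ε / 2 := by field_simp
  filter_upwards [hw (ε / 2) (by positivity)] with t ht
  calc ν (p + t • v) ≤ ν (p + t • w) + K * dist (p + t • v) (p + t • w) := hν.le_add_mul _ _
    _ = ν (p + t • w) + |t| * (K * dist v w) := by
      rw [dist_add_left, dist_smul₀, Real.norm_eq_abs]; ring
    _ ≤ ν p + ε * |t| := by nlinarith [abs_nonneg t]

def ConvexOn.flatSubmodule (hν : ConvexOn ℝ univ ν) (p : X) : Submodule ℝ X where
  carrier := {v | IsFlatAlong ν p v}
  zero_mem' := isFlatAlong_zero
  add_mem' := IsFlatAlong.add hν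
  smul_mem' c _ hv := IsFlatAlong.smul hv c

theorem isFlatAlong_of_dense_span {K : NNReal} {ξ : ℕ → X} (hν : ConvexOn ℝ univ ν)
    (hL : LipschitzWith K ν) (hξ : Dense (Submodule.span ℝ (range ξ) : Set X))
    (h : ∀ n, IsFlatAlong ν p (ξ n)) (v : X) : IsFlatAlong ν p v := by
  have hspan : Submodule.span ℝ (range ξ) ≤ hν.flatSubmodule p :=
    Submodule.span_le.2 (range_subset_iff.2 h)
  exact closure_minimal hspan (hL.isClosed_setOf_isFlatAlong p) (hξ.closure_eq ▸ mem_univ v)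

theorem ConvexOn.le_add_mul_of_le (hν : ConvexOn ℝ univ ν) {s c t : ℝ} (hs : 0 < s)
    (h : ν (p + s • v) ≤ ν p + c * s) (ht : 0 ≤ t) (hts : t ≤ s) :
    ν (p + t • v) ≤ ν p + c * t := by
  have hcomb : p + t • v = (t / s) • (p + s • v) + (1 - t / s) • p := by
    rw [smul_add, smul_smul, div_mul_cancel₀ t hs.ne']; module
  have hts' : t / s ≤ 1 := (div_le_one hs).2 hts
  calc ν (p + t • v) ≤ (t / s) • ν (p + s • v) + (1 - t / s) • ν p := by
        rw [hcomb]; exact hν.2 trivial trivial (by positivity) (by linarith) (by ring)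
    _ ≤ (t / s) * (ν p + c * s) + (1 - t / s) * ν p := by
        simp only [smul_eq_mul]; gcongr
    _ = ν p + c * t := by field_simp; ring

theorem ConvexOn.isFlatAlong_of_second_difference (hν : ConvexOn ℝ univ ν)
    (hmin : ∀ t : ℝ, ν p ≤ ν (p + t • v))
    (hsd : ∀ k : ℕ, ∃ s > 0, ν (p + s • v) + ν (p - s • v) - 2 * ν p < s / (k + 1)) :
    IsFlatAlong ν p v := by
  intro ε hε
  obtain ⟨k, hk⟩ := exists_nat_one_div_lt hε
  obtain ⟨s, hs, hsk⟩ := hsd k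
  have hsε : s / (k + 1) ≤ ε * s := by
    rw [div_eq_mul_one_div, mul_comm]; exact mul_le_mul_of_nonneg_right hk.le hs.le
  have hpos : ν (p + s • v) ≤ ν p + ε * s := by
    have := hmin (-s)
    rw [neg_smul, ← sub_eq_add_neg] at this
    linarith
  have hneg : ν (p + s • -v) ≤ ν p + ε * s := by
    rw [smul_neg, ← sub_eq_add_neg]; linarith [hmin s]
  filter_upwards [Icc_mem_nhds (neg_lt_zero.2 hs) hs] with t ⟨hst, hts⟩
  rcases le_total 0 t with ht | ht
  · rw [abs_of_nonneg ht]; exact hν.le_add_mul_of_le hs hpos ht hts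
  · rw [abs_of_nonpos ht, show t • v = (-t) • -v by rw [neg_smul_neg]]
    exact hν.le_add_mul_of_le hs hneg (by linarith) (by linarith)

theorem not_isFlatAlong_gauge_self {D : Set X} (hp : gauge D p = 1) :
    ¬ IsFlatAlong (gauge D) p p := by
  intro h
  obtain ⟨t, ht, hle⟩ := (h (1 / 2) (by norm_num)).exists_gt
  rw [show p + t • p = (1 + t) • p by rw [add_smul, one_smul],
    gauge_smul_of_nonneg (by linarith), smul_eq_mul, hp, abs_of_pos ht] at hle
  linarith

end Flatness

section LineNull

variable {X : Type*} [NormedAddCommGroup X] [NormedSpace ℝ X]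

theorem AffineMap.lineMap_self_add_apply (x v : X) (t : ℝ) :
    AffineMap.lineMap x (x + v) t = x + t • v := by
  rw [AffineMap.lineMap_apply_module', add_sub_cancel_left, add_comm]

theorem Convex.countable_setOf_add_smul_mem_frontier {D : Set X} (hc : Convex ℝ D) {x v : X}
    {t₀ : ℝ} (h₀ : x + t₀ • v ∈ interior D) : {t : ℝ | x + t • v ∈ frontier D}.Countable := by
  set S := {t : ℝ | x + t • v ∈ frontier D}
  have hsep : ∀ a ∈ S, ∀ b ∈ S, a ∉ openSegment ℝ t₀ b := by
    intro a ha b hb hab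
    have : x + a • v ∈ interior D := by
      refine hc.openSegment_interior_closure_subset_interior h₀ (frontier_subset_closure hb) ?_
      simp only [← AffineMap.lineMap_self_add_apply, ← image_openSegment]
      exact mem_image_of_mem _ hab
    exact disjoint_left.1 disjoint_interior_frontier this ha
  have hright : (S ∩ Ioi t₀).Subsingleton := fun a ha b hb =>
    le_antisymm (not_lt.1 fun hba => hsep b hb.1 a ha.1 (Ioo_subset_openSegment ⟨hb.2, hba⟩))
      (not_lt.1 fun hab => hsep a ha.1 b hb.1 (Ioo_subset_openSegment ⟨ha.2, hab⟩))
  have hleft : (S ∩ Iio t₀).Subsingleton := fun a ha b hb =>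
    le_antisymm (not_lt.1 fun hba => hsep a ha.1 b hb.1
        (openSegment_symm ℝ b t₀ ▸ Ioo_subset_openSegment ⟨hba, ha.2⟩))
      (not_lt.1 fun hab => hsep b hb.1 a ha.1
        (openSegment_symm ℝ a t₀ ▸ Ioo_subset_openSegment ⟨hab, hb.2⟩))
  refine (hleft.countable.union hright.countable).mono fun t ht => ?_
  rcases lt_trichotomy t t₀ with h | rfl | h
  · exact Or.inl ⟨ht, h⟩
  · exact absurd ht (disjoint_left.1 disjoint_interior_frontier h₀)
  · exact Or.inr ⟨ht, h⟩

theorem DifferentiableAt.tendsto_second_difference_div {g : ℝ → ℝ} {t : ℝ}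
    (hg : DifferentiableAt ℝ g t) :
    Tendsto (fun s => (g (t + s) + g (t - s) - 2 * g t) / s) (𝓝[>] 0) (𝓝 0) := by
  have h := hg.hasDerivAt.tendsto_slope_zero
  have hright := h.mono_left (nhdsGT_le_nhdsNE 0)
  have hleft := (h.mono_left (nhdsLT_le_nhdsNE 0)).comp
    (by simpa using tendsto_neg_nhdsGT_neg (a := (0 : ℝ)))
  refine (sub_self (deriv g t) ▸ hright.sub hleft).congr' ?_
  filter_upwards [self_mem_nhdsWithin] with s (hs : 0 < s)
  simp only [Function.comp_apply, smul_eq_mul, ← sub_eq_add_neg]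
  field_simp
  ring

def frontierTransversal (D : Set X) (v : X) : Set X :=
  {p | p ∈ frontier D ∧ ∃ t : ℝ, p + t • v ∈ interior D}

def kinkSet (ν : X → ℝ) (v : X) : Set X :=
  {p | ∃ k : ℕ, ∀ s > 0, s / (k + 1) ≤ ν (p + s • v) + ν (p - s • v) - 2 * ν p}

theorem Convex.volume_setOf_add_smul_mem_frontierTransversal {D : Set X} (hc : Convex ℝ D)
    (x v : X) : volume {t : ℝ | x + t • v ∈ frontierTransversal D v} = 0 := by
  rcases eq_empty_or_nonempty {t : ℝ | x + t • v ∈ frontierTransversal D v}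
    with h | ⟨t₁, -, s, hs⟩
  · rw [h, measure_empty]
  · refine measure_mono_null (fun t ht => ht.1) (Countable.measure_zero ?_ _)
    refine hc.countable_setOf_add_smul_mem_frontier (t₀ := t₁ + s) ?_
    rwa [add_smul, ← add_assoc]

theorem LipschitzWith.volume_setOf_add_smul_mem_kinkSet {ν : X → ℝ} {K : NNReal}
    (hν : LipschitzWith K ν) (x v : X) : volume {t : ℝ | x + t • v ∈ kinkSet ν v} = 0 := by
  set g : ℝ → ℝ := fun t => ν (x + t • v)
  have hg : LipschitzWith (K * nndist x (x + v)) g := by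
    simpa only [Function.comp_def, AffineMap.lineMap_self_add_apply]
      using hν.comp (lipschitzWith_lineMap (𝕜 := ℝ) x (x + v))
  refine measure_mono_null (t := {t | ¬ DifferentiableAt ℝ g t}) ?_
    (ae_iff.1 hg.ae_differentiableAt_real)
  rintro t ⟨k, hk⟩ hdiff
  have hlin : ∀ᶠ s in 𝓝[>] 0, 1 / ((k : ℝ) + 1) ≤ (g (t + s) + g (t - s) - 2 * g t) / s := by
    filter_upwards [self_mem_nhdsWithin] with s (hs : 0 < s)
    rw [le_div_iff₀ hs, one_div_mul_eq_div]
    simpa only [g, add_smul, sub_smul, add_assoc, add_sub_assoc] using hk s hs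
  have := ge_of_tendsto hdiff.tendsto_second_difference_div hlin
  have : (0 : ℝ) < 1 / ((k : ℝ) + 1) := by positivity
  linarith

theorem Convex.frontier_subset_iUnion_frontierTransversal_union_kinkSet {D : Set X}
    {ξ : ℕ → X} (hc : Convex ℝ D) (h0 : D ∈ 𝓝 0) (hξ : Dense (Submodule.span ℝ (range ξ) : Set X)) :
    frontier D ⊆ ⋃ n, frontierTransversal D (ξ n) ∪ kinkSet (gauge D) (ξ n) := by
  intro p hp
  by_contra hp'
  simp only [mem_iUnion, mem_union, not_exists, not_or] at hp'
  obtain ⟨K, hK⟩ := hc.lipschitz_gauge h0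
  have hν := hc.convexOn_gauge (absorbent_nhds_zero h0)
  have hp1 : gauge D p = 1 := (gauge_eq_one_iff_mem_frontier hc h0).2 hp
  refine not_isFlatAlong_gauge_self hp1 (isFlatAlong_of_dense_span hν hK hξ (fun n =>
    hν.isFlatAlong_of_second_difference (fun t => ?_) (fun k => ?_)) p)
  · rw [hp1]
    by_contra! ht
    exact (hp' n).1 ⟨hp, t, (gauge_lt_one_iff_mem_interior hc h0).1 ht⟩
  · have := (hp' n).2
    simp only [kinkSet, mem_ofPred_eq, not_exists, not_forall, not_le, exists_prop] at this
    exact this k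

variable [MeasurableSpace X] [BorelSpace X]

theorem measurableSet_frontierTransversal (D : Set X) (v : X) :
    MeasurableSet (frontierTransversal D v) := by
  have hopen : IsOpen {p : X | ∃ t : ℝ, p + t • v ∈ interior D} := by
    rw [ofPred_exists]
    exact isOpen_iUnion fun t => isOpen_interior.preimage (continuous_add_const _)
  exact isClosed_frontier.measurableSet.inter hopen.measurableSet

theorem measurableSet_kinkSet {ν : X → ℝ} (hν : Continuous ν) (v : X) :
    MeasurableSet (kinkSet ν v) := by
  simp only [kinkSet, ofPred_exists, ofPred_forall]
  exact MeasurableSet.iUnion fun k => (isClosed_iInter fun s => isClosed_iInter fun _ =>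
    isClosed_le continuous_const (by fun_prop)).measurableSet

end LineNull

section AronszajnNull

variable {X : Type*} [NormedAddCommGroup X] [NormedSpace ℝ X] [MeasurableSpace X]
  {ξ : ℕ → X}

def IsAronszajnNullAlong (ξ : ℕ → X) (S : Set X) : Prop :=
  ∃ N : ℕ → Set X, S ⊆ ⋃ n, N n ∧
    ∀ n, MeasurableSet (N n) ∧ ∀ x : X, volume {t : ℝ | x + t • ξ n ∈ N n} = 0

theorem IsAronszajnNullAlong.iUnion {ι : Sort*} [Countable ι] {S : ι → Set X}
    (h : ∀ i, IsAronszajnNullAlong ξ (S i)) : IsAronszajnNullAlong ξ (⋃ i, S i) := by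
  choose N hSN hN using h
  refine ⟨fun n => ⋃ i, N i n, iUnion_subset fun i p hp => ?_,
    fun n => ⟨MeasurableSet.iUnion fun i => (hN i n).1, fun x => ?_⟩⟩
  · obtain ⟨n, hn⟩ := mem_iUnion.1 (hSN i hp)
    exact mem_iUnion.2 ⟨n, mem_iUnion.2 ⟨i, hn⟩⟩
  · simpa only [mem_iUnion, ofPred_exists] using measure_iUnion_null fun i => (hN i n).2 x

theorem IsAronszajnNullAlong.preimage_add_const [BorelSpace X] {S : Set X}
    (h : IsAronszajnNullAlong ξ S) (a : X) : IsAronszajnNullAlong ξ ((· + a) ⁻¹' S) := by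
  obtain ⟨N, hSN, hN⟩ := h
  refine ⟨fun n => (· + a) ⁻¹' N n, fun p hp => by simpa using hSN hp,
    fun n => ⟨(hN n).1.preimage (continuous_add_const a).measurable, fun x => ?_⟩⟩
  simpa only [mem_preimage, add_right_comm] using (hN n).2 (x + a)

theorem AronszajnNull.of_isAronszajnNullAlong {N : Set X} (hN : MeasurableSet N)
    (h : ∀ ξ : ℕ → X, Dense (Submodule.span ℝ (range ξ) : Set X) → IsAronszajnNullAlong ξ N) :
    AronszajnNull N := by
  refine ⟨hN, fun ξ hξ => ?_⟩
  obtain ⟨M, hNM, hM⟩ := h ξ hξ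
  refine ⟨fun n => M n ∩ N, ?_, fun n => ⟨(hM n).1.inter hN,
    fun x => measure_mono_null (fun t ht => ht.1) ((hM n).2 x)⟩⟩
  rw [← iUnion_inter, inter_eq_right.2 hNM]

variable [BorelSpace X]

theorem Convex.isAronszajnNullAlong_frontier_of_mem_nhds_zero {D : Set X} (hc : Convex ℝ D)
    (h0 : D ∈ 𝓝 0) (hξ : Dense (Submodule.span ℝ (range ξ) : Set X)) :
    IsAronszajnNullAlong ξ (frontier D) := by
  obtain ⟨K, hK⟩ := hc.lipschitz_gauge h0
  exact ⟨_, hc.frontier_subset_iUnion_frontierTransversal_union_kinkSet h0 hξ, fun n =>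
    ⟨(measurableSet_frontierTransversal _ _).union (measurableSet_kinkSet hK.continuous _),
      fun x => measure_union_null (hc.volume_setOf_add_smul_mem_frontierTransversal x (ξ n))
        (hK.volume_setOf_add_smul_mem_kinkSet x (ξ n))⟩⟩

theorem Convex.isAronszajnNullAlong_frontier {D : Set X} (hc : Convex ℝ D)
    (hD : (interior D).Nonempty) (hξ : Dense (Submodule.span ℝ (range ξ) : Set X)) :
    IsAronszajnNullAlong ξ (frontier D) := by
  obtain ⟨x₀, hx₀⟩ := hD
  have h0 : (x₀ + ·) ⁻¹' D ∈ 𝓝 0 := by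
    rw [← mem_interior_iff_mem_nhds, ← Homeomorph.coe_addLeft, ← Homeomorph.preimage_interior]
    simpa using hx₀
  have := (hc.translate_preimage_right x₀).isAronszajnNullAlong_frontier_of_mem_nhds_zero h0 hξ
  rw [← Homeomorph.coe_addLeft, ← Homeomorph.preimage_frontier] at this
  convert this.preimage_add_const (-x₀) using 1
  ext p
  simp

end AronszajnNull

theorem stmt_4_general {X : Type*} [NormedAddCommGroup X] [NormedSpace ℝ X]
    [MeasurableSpace X] [BorelSpace X]
    (f : X → ℝ) (hq : QuasiconvexFun f) (hd : DenselyContinuous f)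
    (m : ℝ) (hm : IsTopEssInf f m) :
    ∃ N : Set X, AronszajnNull N ∧ {x : X | m < f x ∧ ¬ ContinuousAt f x} ⊆ N := by
  refine ⟨⋃ (q : ℚ) (_ : m < q), frontier (closure {x | f x < q}),
    AronszajnNull.of_isAronszajnNullAlong ?_ fun ξ hξ => ?_, ?_⟩
  · exact MeasurableSet.iUnion fun q => MeasurableSet.iUnion fun _ =>
      isClosed_frontier.measurableSet
  · refine IsAronszajnNullAlong.iUnion fun q => IsAronszajnNullAlong.iUnion fun hmq => ?_
    have hint : (interior (closure {x | f x < q})).Nonempty :=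
      nonempty_iff_ne_empty.2 fun h => hm.2 q hmq (IsNowhereDense.isMeagre h)
    exact (hq.convex_setOf_lt q).closure.isAronszajnNullAlong_frontier hint hξ
  · rintro x ⟨hmx, hx⟩
    by_contra hxN
    exact hx (hq.continuousAt_of_forall_notMem_frontier hd hmx fun q hmq hfr =>
      hxN (mem_iUnion₂.2 ⟨q, hmq, hfr⟩))

/-- On a separable Banach space, the points of `X \ {f ≤ m}` at which `f` is not
continuous are contained in an Aronszajn null set. -/
theorem stmt_4 {X : Type*} [NormedAddCommGroup X] [NormedSpace ℝ X] [CompleteSpace X]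
    [TopologicalSpace.SeparableSpace X] [MeasurableSpace X] [BorelSpace X]
    (f : X → ℝ) (hq : QuasiconvexFun f) (hd : DenselyContinuous f)
    (m : ℝ) (hm : IsTopEssInf f m) :
    ∃ N : Set X, AronszajnNull N ∧ {x : X | m < f x ∧ ¬ ContinuousAt f x} ⊆ N :=
  stmt_4_general f hq hd m hm
end

section
/- Let X be a real Banach space and let f : X → ℝ be ideally quasiconvex, i.e., every lower level set F'_α = {x ∈ X : f(x) ≤ α} (α ∈ ℝ) is ideally convex. Then f is quasiconvex and densely continuous. -/
open Filter Topology Set MeasureTheory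

theorem key {X : Type*} [NormedAddCommGroup X] [NormedSpace ℝ X] [CompleteSpace X]
    {C : Set X} (hC : IdeallyConvex C) : interior (closure C) ⊆ C := by
  intro x hx
  obtain ⟨r, hr, hball⟩ := Metric.isOpen_iff.1 isOpen_interior x hx
  replace hball : Metric.ball x r ⊆ closure C := hball.trans interior_subset
  -- pick function
  have H : ∀ (z : X) (n : ℕ), z ∈ Metric.ball x r → ∃ c, c ∈ C ∧ ‖z - c‖ < r / 2 ^ (n + 2) := by
    intro z n hz
    have hz' := hball hz
    have hpos : 0 < r / 2 ^ (n + 2) := by positivity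
    obtain ⟨c, hc, hd⟩ := Metric.mem_closure_iff.1 hz' _ hpos
    exact ⟨c, hc, by rwa [← dist_eq_norm]⟩
  choose! pick hpickC hpickd using H
  set xs : ℕ → X := fun n => Nat.rec x (fun n z => (2 : ℝ) • z - pick z n) n with hxs
  have hxs0 : xs 0 = x := rfl
  have hxsS : ∀ n, xs (n + 1) = (2 : ℝ) • xs n - pick (xs n) n := fun n => rfl
  -- invariant
  have inv : ∀ n, ‖xs n - x‖ ≤ r / 2 * (1 - (1 / 2) ^ n) := by
    intro n
    induction n with
    | zero => simp [hxs0]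
    | succ n ih =>
      have hball' : xs n ∈ Metric.ball x r := by
        rw [Metric.mem_ball, dist_eq_norm]
        calc ‖xs n - x‖ ≤ r / 2 * (1 - (1/2)^n) := ih
        _ < r := by nlinarith [pow_pos (by norm_num : (0:ℝ) < 1/2) n, pow_le_one₀ (by norm_num : (0:ℝ) ≤ 1/2) (by norm_num : (1:ℝ)/2 ≤ 1) (n := n)]
      have hd := hpickd (xs n) n hball'
      have : xs (n + 1) - xs n = xs n - pick (xs n) n := by
        rw [hxsS n]; module
      calc ‖xs (n+1) - x‖ ≤ ‖xs (n+1) - xs n‖ + ‖xs n - x‖ := norm_sub_le_norm_sub_add_norm_sub _ _ _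
        _ ≤ r / 2 ^ (n + 2) + r / 2 * (1 - (1/2)^n) := by
            rw [this]; exact add_le_add hd.le ih
        _ ≤ r / 2 * (1 - (1/2)^(n+1)) := by
            have h2 : r / 2 ^ (n + 2) = r / 2 * ((1/2)^n - (1/2)^(n+1)) := by
              rw [div_pow, div_pow, one_pow, one_pow, pow_succ, pow_succ]
              have : (0:ℝ) < 2 ^ n := by positivity
              field_simp
              ring
            linarith
  have hmem : ∀ n, xs n ∈ Metric.ball x r := by
    intro n
    rw [Metric.mem_ball, dist_eq_norm]
    calc ‖xs n - x‖ ≤ r / 2 * (1 - (1/2)^n) := inv n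
      _ < r := by nlinarith [pow_pos (by norm_num : (0:ℝ) < 1/2) n,
          pow_le_one₀ (by norm_num : (0:ℝ) ≤ 1/2) (by norm_num : (1:ℝ)/2 ≤ 1) (n := n)]
  set c : ℕ → X := fun n => pick (xs n) n with hc
  have hcC : ∀ n, c n ∈ C := fun n => hpickC _ _ (hmem n)
  have hcd : ∀ n, ‖xs n - c n‖ < r / 2 ^ (n + 2) := fun n => hpickd _ _ (hmem n)
  have hcb : ∀ n, ‖c n - x‖ ≤ r := by
    intro n
    have h1 : ‖c n - x‖ ≤ ‖c n - xs n‖ + ‖xs n - x‖ := norm_sub_le_norm_sub_add_norm_sub _ _ _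
    have h2 : ‖c n - xs n‖ = ‖xs n - c n‖ := norm_sub_rev _ _
    have h3 : r / 2 ^ (n + 2) ≤ r / 2 := by
      apply div_le_div_of_nonneg_left hr.le (by norm_num)
      exact le_self_pow₀ (by norm_num) (by omega)
    have h4 := inv n
    have h5 : r / 2 * (1 - (1/2)^n) ≤ r / 2 := by
      nlinarith [pow_pos (by norm_num : (0:ℝ) < 1/2) n]
    linarith [hcd n]
  -- partial sums
  have hpart : ∀ n, ∑ k ∈ Finset.range n, ((1:ℝ)/2)^(k+1) • c k = x - ((1:ℝ)/2)^n • xs n := by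
    intro n
    induction n with
    | zero => simp [hxs0]
    | succ n ih =>
      rw [Finset.sum_range_succ, ih, hxsS n]
      rw [pow_succ]
      module
  -- the tail tends to zero
  have hxsnorm : ∀ n, ‖xs n‖ ≤ ‖x‖ + r := by
    intro n
    have h1 : xs n = (xs n - x) + x := by abel
    calc ‖xs n‖ = ‖(xs n - x) + x‖ := by rw [← h1]
      _ ≤ ‖xs n - x‖ + ‖x‖ := norm_add_le _ _
      _ ≤ ‖x‖ + r := by
          have h2 := hmem n
          rw [Metric.mem_ball, dist_eq_norm] at h2
          linarith
  have hcnorm : ∀ n, ‖c n‖ ≤ ‖x‖ + r := by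
    intro n
    have h1 : c n = (c n - x) + x := by abel
    calc ‖c n‖ = ‖(c n - x) + x‖ := by rw [← h1]
      _ ≤ ‖c n - x‖ + ‖x‖ := norm_add_le _ _
      _ ≤ ‖x‖ + r := by linarith [hcb n]
  have hpownorm : ∀ n : ℕ, ‖((1:ℝ)/2)^n‖ = ((1:ℝ)/2)^n := fun n => by
    rw [Real.norm_eq_abs, abs_of_nonneg (by positivity)]
  have htail : Tendsto (fun n => ((1:ℝ)/2)^n • xs n) atTop (𝓝 0) := by
    have hb : ∀ n, ‖((1:ℝ)/2)^n • xs n‖ ≤ (1/2)^n * (‖x‖ + r) := by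
      intro n
      rw [norm_smul, hpownorm]
      have hp : (0:ℝ) ≤ (1/2)^n := by positivity
      exact mul_le_mul_of_nonneg_left (hxsnorm n) hp
    refine squeeze_zero_norm hb ?_
    have := tendsto_pow_atTop_nhds_zero_of_lt_one (by norm_num : (0:ℝ) ≤ 1/2)
      (by norm_num : (1:ℝ)/2 < 1)
    simpa using this.mul_const (‖x‖ + r)
  -- summability
  have hsummable : Summable (fun n => ((1:ℝ)/2)^(n+1) • c n) := by
    apply Summable.of_norm_bounded (g := fun n => (1/2)^(n+1) * (‖x‖ + r))
    · have : Summable (fun n : ℕ => ((1:ℝ)/2)^(n+1)) := by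
        exact (summable_geometric_of_lt_one (by norm_num) (by norm_num)).comp_injective
          (add_left_injective 1)
      exact this.mul_right _
    · intro n
      rw [norm_smul, hpownorm]
      exact mul_le_mul_of_nonneg_left (hcnorm n) (by positivity)
  obtain ⟨a, ha⟩ := hsummable
  have hlim := ha.tendsto_sum_nat
  have hlim2 : Tendsto (fun n => ∑ k ∈ Finset.range n, ((1:ℝ)/2)^(k+1) • c k) atTop (𝓝 x) := by
    simp only [hpart]
    have := (tendsto_const_nhds (x := x) (f := atTop (α := ℕ))).sub htail
    simpa using this
  have hax : a = x := tendsto_nhds_unique hlim hlim2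
  have hlam : HasSum (fun n : ℕ => ((1:ℝ)/2)^(n+1)) 1 := by
    have := hasSum_geometric_two' 1
    convert this using 2 with n
    rw [pow_succ, div_pow, one_pow]
    ring
  have := hC c (fun n => ((1:ℝ)/2)^(n+1)) hcC ?_ ?_ hlam
  · rwa [ha.tsum_eq, hax] at this
  · apply Bornology.IsBounded.subset (Metric.isBounded_closedBall (x := x) (r := ‖x‖ + r + r))
    rintro _ ⟨n, rfl⟩
    rw [Metric.mem_closedBall, dist_eq_norm]
    have := hcb n
    have : (0:ℝ) ≤ ‖x‖ := norm_nonneg _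
    linarith [hcb n, norm_nonneg x]
  · intro n
    constructor
    · positivity
    · exact pow_le_one₀ (by norm_num) (by norm_num)

theorem aux_quasiconvex {X : Type*} [NormedAddCommGroup X] [NormedSpace ℝ X]
    (f : X → ℝ) (h : ∀ α : ℝ, IdeallyConvex {x : X | f x ≤ α}) :
    QuasiconvexFun f := by
  intro x y l hl
  set α := max (f x) (f y) with hα
  set xx : ℕ → X := fun n => if n = 0 then x else y with hxx
  set lam : ℕ → ℝ := fun n => if n = 0 then l else if n = 1 then 1 - l else 0 with hlam
  have hmem : ∀ n, xx n ∈ {z : X | f z ≤ α} := by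
    intro n
    simp only [hxx, Set.mem_setOf_eq]
    split
    · exact le_max_left _ _
    · exact le_max_right _ _
  have hbd : Bornology.IsBounded (Set.range xx) := by
    apply Bornology.IsBounded.subset (Set.Finite.isBounded
      ((Set.finite_singleton y).insert x))
    rintro _ ⟨n, rfl⟩
    simp only [hxx]
    split
    · exact Set.mem_insert _ _
    · exact Set.mem_insert_of_mem _ rfl
  have hicc : ∀ n, lam n ∈ Set.Icc (0:ℝ) 1 := by
    intro n
    simp only [hlam]
    split
    · exact hl
    · split
      · constructor <;> [linarith [hl.2]; linarith [hl.1]]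
      · exact ⟨le_refl 0, zero_le_one⟩
  have hsum1 : HasSum lam 1 := by
    have h1 := (hasSum_ite_eq (0:ℕ) l).add (hasSum_ite_eq (1:ℕ) (1-l))
    have heq : (fun n : ℕ => (if n = 0 then l else 0) + (if n = 1 then 1 - l else 0)) = lam := by
      funext n
      simp only [hlam]
      match n with
      | 0 => norm_num
      | 1 => norm_num
      | (k+2) => norm_num
    rw [heq] at h1
    simpa using h1
  have hsum2 : HasSum (fun n => lam n • xx n) (l • x + (1 - l) • y) := by
    have h1 := (hasSum_ite_eq (0:ℕ) (l • x)).add (hasSum_ite_eq (1:ℕ) ((1-l) • y))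
    have heq : (fun n : ℕ => (if n = 0 then l • x else 0) + (if n = 1 then (1-l) • y else 0))
        = fun n => lam n • xx n := by
      funext n
      simp only [hlam, hxx]
      match n with
      | 0 => simp
      | 1 => simp
      | (k+2) => simp
    rwa [heq] at h1
  have := h α xx lam hmem hbd hicc hsum1
  rwa [hsum2.tsum_eq] at this

theorem aux_dense {X : Type*} [NormedAddCommGroup X] [NormedSpace ℝ X] [CompleteSpace X]
    (f : X → ℝ) (h : ∀ α : ℝ, IdeallyConvex {x : X | f x ≤ α}) :
    DenselyContinuous f := by
  set D : ℚ → Set X := fun q =>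
    closure {x : X | f x ≤ (q:ℝ)} \ interior {x : X | f x ≤ (q:ℝ)} with hD
  have hmeagre : ∀ q : ℚ, IsMeagre (D q) := by
    intro q
    rw [isMeagre_iff_countable_union_isNowhereDense]
    refine ⟨{D q}, ?_, Set.countable_singleton _, by simp⟩
    rintro t rfl0
    simp only [Set.mem_singleton_iff] at rfl0
    subst rfl0
    have hclosed : IsClosed (D q) := isClosed_closure.sdiff isOpen_interior
    rw [hclosed.isNowhereDense_iff]
    rw [Set.eq_empty_iff_forall_notMem]
    intro z hz
    have h1 : z ∈ interior (closure {x : X | f x ≤ (q:ℝ)}) :=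
      interior_mono Set.diff_subset hz
    have h2 : interior (closure {x : X | f x ≤ (q:ℝ)}) ⊆ interior {x : X | f x ≤ (q:ℝ)} :=
      interior_maximal (key (h q)) isOpen_interior
    exact (interior_subset hz).2 (h2 h1)
  have hunion : IsMeagre (⋃ q : ℚ, D q) := by
    set e : ℕ ≃ ℚ := (Denumerable.eqv ℚ).symm
    have : (⋃ n : ℕ, D (e n)) = ⋃ q : ℚ, D q := e.surjective.iUnion_comp D
    rw [← this]
    exact isMeagre_iUnion fun n => hmeagre (e n)
  have hdense : Dense (⋃ q : ℚ, D q)ᶜ := dense_of_mem_residual hunion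
  apply hdense.mono
  intro x hx
  simp only [Set.mem_compl_iff, Set.mem_iUnion, not_exists] at hx
  show ContinuousAt f x
  rw [ContinuousAt, Metric.tendsto_nhds]
  intro ε hε
  obtain ⟨q1, hq1a, hq1b⟩ := exists_rat_btwn (show f x - ε < f x by linarith)
  obtain ⟨q2, hq2a, hq2b⟩ := exists_rat_btwn (show f x < f x + ε by linarith)
  have h1 : x ∉ closure {y : X | f y ≤ (q1:ℝ)} := by
    intro hcl
    refine hx q1 ⟨hcl, fun hint => ?_⟩
    have hm : x ∈ {z : X | f z ≤ (q1:ℝ)} := interior_subset hint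
    simp only [Set.mem_setOf_eq] at hm
    linarith
  have h1' : ∀ᶠ y in 𝓝 x, (q1:ℝ) < f y := by
    have hop : IsOpen (closure {y : X | f y ≤ (q1:ℝ)})ᶜ := isClosed_closure.isOpen_compl
    filter_upwards [hop.mem_nhds h1] with y hy
    by_contra hcon
    push_neg at hcon
    exact hy (subset_closure hcon)
  have h2 : x ∈ interior {y : X | f y ≤ (q2:ℝ)} := by
    by_contra hint
    exact hx q2 ⟨subset_closure (le_of_lt hq2a), hint⟩
  have h2' : ∀ᶠ y in 𝓝 x, f y ≤ (q2:ℝ) := by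
    filter_upwards [isOpen_interior.mem_nhds h2] with y hy
    have hm : y ∈ {z : X | f z ≤ (q2:ℝ)} := interior_subset hy
    exact hm
  filter_upwards [h1', h2'] with y hy1 hy2
  rw [Real.dist_eq, abs_lt]
  constructor <;> linarith

/-- An ideally quasiconvex function (all sublevel sets `{f ≤ α}` ideally convex) on a
Banach space is quasiconvex and densely continuous. -/
theorem stmt_6 {X : Type*} [NormedAddCommGroup X] [NormedSpace ℝ X] [CompleteSpace X]
    (f : X → ℝ) (h : ∀ α : ℝ, IdeallyConvex {x : X | f x ≤ α}) :
    QuasiconvexFun f ∧ DenselyContinuous f :=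
  ⟨aux_quasiconvex f h, aux_dense f h⟩
end

section
/- Let X be a real Banach space and let f : X → ℝ be strongly ideally quasiconvex, i.e., every strict lower level set F_α = {x ∈ X : f(x) < α} (α ∈ ℝ) is ideally convex. Then f is quasiconvex and densely continuous and, for any m ∈ ℝ which is the topological essential infimum of f, the set F_m = {x ∈ X : f(x) < m} is nowhere dense. -/
open Filter Topology Set MeasureTheory

/-!
An ideally convex set `C` in a normed space satisfies `interior (closure C) ⊆ C`: if the ball
`B(x, ε)` lies in `closure C`, then starting from `u₀ = x` one can repeatedly choose `dₙ ∈ C`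
near `x` with `uₙ₊₁ = 2 uₙ - dₙ` staying near `x`, and then `x = ∑ 2^-(n+1) dₙ` is an infinite
convex combination of a bounded sequence of `C`. Consequently every strict sublevel set `{f < α}`
has nowhere dense frontier, and a function whose rational strict sublevel sets all have nowhere
dense frontiers is continuous off a meagre set. Finally `{f < m} = ⋃ₙ {f < m - 1/(n+1)}` is
meagre, so by Baire's theorem and `interior (closure C) ⊆ C` it is nowhere dense.
-/

open Metric Bornology

section Normed

variable {E : Type*} [NormedAddCommGroup E] [NormedSpace ℝ E]

theorem hasSum_half_pow_succ_smul_of_two_smul_sub_mem {S D : Set E} (hS : IsBounded S)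
    (hD : IsBounded D) (hstep : ∀ u ∈ S, ∃ d ∈ D, (2 : ℝ) • u - d ∈ S) {x : E} (hx : x ∈ S) :
    ∃ d : ℕ → E, (∀ n, d n ∈ D) ∧ HasSum (fun n => (1 / 2 : ℝ) ^ (n + 1) • d n) x := by
  choose! g hgD hgS using hstep
  set u : ℕ → E := fun n => (fun v => (2 : ℝ) • v - g v)^[n] x
  have hu_succ : ∀ n, u (n + 1) = (2 : ℝ) • u n - g (u n) := fun n =>
    Function.iterate_succ_apply' _ n x
  have hu : ∀ n, u n ∈ S := by
    intro n
    induction n with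
    | zero => exact hx
    | succ n ih => rw [hu_succ]; exact hgS _ ih
  refine ⟨g ∘ u, fun n => hgD _ (hu n), ?_⟩
  have hpartial : ∀ n, ∑ k ∈ Finset.range n, (1 / 2 : ℝ) ^ (k + 1) • g (u k)
      = x - (1 / 2 : ℝ) ^ n • u n := by
    intro n
    induction n with
    | zero => simp [u]
    | succ n ih => rw [Finset.sum_range_succ, ih, hu_succ, pow_succ]; module
  obtain ⟨R, hR⟩ := hD.exists_norm_le
  obtain ⟨R', hR'⟩ := hS.exists_norm_le
  have hsummable : Summable fun n => ‖(1 / 2 : ℝ) ^ (n + 1) • g (u n)‖ := by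
    refine Summable.of_nonneg_of_le (fun n => norm_nonneg _) (fun n => ?_)
      ((summable_geometric_two.mul_right R).comp_injective (add_left_injective 1))
    rw [norm_smul, Real.norm_of_nonneg (by positivity)]
    exact mul_le_mul_of_nonneg_left (hR _ (hgD _ (hu n))) (by positivity)
  have hvanish : Tendsto (fun n => (1 / 2 : ℝ) ^ n • u n) atTop (𝓝 0) :=
    (tendsto_pow_atTop_nhds_zero_of_lt_one (by norm_num) (by norm_num)
      |>.zero_smul_isBoundedUnder_le (isBoundedUnder_of ⟨R', fun n => hR' _ (hu n)⟩))
  show HasSum (fun n => (1 / 2 : ℝ) ^ (n + 1) • g (u n)) x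
  rw [hasSum_iff_tendsto_nat_of_summable_norm hsummable]
  have hlim := (tendsto_const_nhds (x := x)).sub hvanish
  rw [sub_zero] at hlim
  exact hlim.congr fun n => (hpartial n).symm

theorem hasSum_half_pow_succ : HasSum (fun n : ℕ => (1 / 2 : ℝ) ^ (n + 1)) 1 := by
  simpa [pow_succ', ← mul_assoc] using hasSum_geometric_two.mul_left (1 / 2 : ℝ)

theorem IdeallyConvex.convex {C : Set E} (hC : IdeallyConvex C) : Convex ℝ C := by
  intro x hx y hy a b ha hb hab
  set w : ℕ → ℝ := fun n => if n = 0 then a else if n = 1 then b else 0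
  set z : ℕ → E := fun n => if n = 0 then x else y
  have hw : ∀ n ∉ Finset.range 2, w n = 0 := by
    intro n hn
    simp only [Finset.mem_range, not_lt] at hn
    simp [w, show n ≠ 0 by omega, show n ≠ 1 by omega]
  have hw_sum : HasSum w 1 := by
    simpa [Finset.sum_range_succ, w, hab] using
      hasSum_sum_of_ne_finset_zero (L := SummationFilter.unconditional ℕ) hw
  have hwz_sum : HasSum (fun n => w n • z n) (a • x + b • y) := by
    simpa [Finset.sum_range_succ, w, z] using hasSum_sum_of_ne_finset_zero
      (L := SummationFilter.unconditional ℕ) (s := Finset.range 2) (f := fun n => w n • z n)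
      (fun n hn => by simp only [hw n hn, zero_smul])
  have hz_mem : ∀ n, z n ∈ C := fun n => by by_cases n = 0 <;> simp [z, *]
  have hz_bdd : IsBounded (range z) :=
    (Set.toFinite {x, y}).isBounded.subset
      (range_subset_iff.2 fun n => by by_cases n = 0 <;> simp [z, *])
  have hw_mem : ∀ n, w n ∈ Icc (0 : ℝ) 1 := by
    intro n
    simp only [w]
    split_ifs <;> constructor <;> linarith
  have := hC z w hz_mem hz_bdd hw_mem hw_sum
  rwa [hwz_sum.tsum_eq] at this

theorem IdeallyConvex.interior_closure_subset {C : Set E} (hC : IdeallyConvex C) :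
    interior (closure C) ⊆ C := by
  intro x hx
  obtain ⟨ε, hε, hball⟩ := Metric.isOpen_iff.1 isOpen_interior x hx
  have hstep : ∀ u ∈ closedBall x (ε / 4),
      ∃ d ∈ C ∩ closedBall x ε, (2 : ℝ) • u - d ∈ closedBall x (ε / 4) := by
    intro u hu
    rw [mem_closedBall] at hu
    set v := (2 : ℝ) • u - x
    have hvx : dist v x = 2 * dist u x := by
      rw [dist_eq_norm, dist_eq_norm, ← Real.norm_two, ← norm_smul, smul_sub, sub_sub,
        ← two_smul ℝ x]
    have hv : v ∈ closure C := interior_subset (hball (by rw [mem_ball, hvx]; linarith))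
    obtain ⟨d, hdC, hvd⟩ := Metric.mem_closure_iff.1 hv (ε / 4) (by positivity)
    refine ⟨d, ⟨hdC, ?_⟩, ?_⟩
    · rw [mem_closedBall]
      linarith [dist_triangle d v x, dist_comm d v]
    · rw [mem_closedBall, dist_eq_norm, sub_right_comm, ← dist_eq_norm]
      exact hvd.le
  obtain ⟨d, hd, hsum⟩ := hasSum_half_pow_succ_smul_of_two_smul_sub_mem isBounded_closedBall
    (isBounded_closedBall.subset inter_subset_right) hstep (mem_closedBall_self (by positivity))
  have := hC d _ (fun n => (hd n).1)
    (isBounded_closedBall.subset (range_subset_iff.2 fun n => (hd n).2))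
    (fun n => ⟨by positivity, pow_le_one₀ (by norm_num) (by norm_num)⟩) hasSum_half_pow_succ
  rwa [hsum.tsum_eq] at this

end Normed

theorem quasiconvexFun_of_convex_setOf_lt {X : Type*} [AddCommGroup X] [Module ℝ X] {f : X → ℝ}
    (h : ∀ α, Convex ℝ {x | f x < α}) : QuasiconvexFun f := by
  intro x y l hl
  by_contra! hlt
  exact lt_irrefl (f (l • x + (1 - l) • y)) (h _ (lt_of_le_of_lt (le_max_left _ _) hlt)
    (lt_of_le_of_lt (le_max_right _ _) hlt) hl.1 (sub_nonneg.2 hl.2) (add_sub_cancel _ _))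

section Topological

variable {X : Type*} [TopologicalSpace X]

theorem isNowhereDense_frontier_of_interior_closure_subset {s : Set X}
    (h : interior (closure s) ⊆ s) : IsNowhereDense (frontier s) := by
  rw [isClosed_frontier.isNowhereDense_iff, eq_empty_iff_forall_notMem]
  intro x hx
  have hsub : interior (frontier s) ⊆ interior s :=
    interior_maximal ((interior_mono frontier_subset_closure).trans h) isOpen_interior
  exact (interior_subset hx).2 (hsub hx)

theorem IsMeagre.isNowhereDense_of_interior_closure_subset [BaireSpace X] {s : Set X}
    (hs : IsMeagre s) (h : interior (closure s) ⊆ s) : IsNowhereDense s :=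
  subset_eq_empty (interior_maximal h isOpen_interior)
    (interior_eq_empty_iff_dense_compl.2 (dense_of_mem_residual hs))

theorem continuousAt_of_forall_notMem_frontier {f : X → ℝ} {z : X}
    (h : ∀ q : ℚ, z ∉ frontier {x | f x < q}) : ContinuousAt f z := by
  rw [ContinuousAt, tendsto_order]
  constructor
  · intro b hb
    obtain ⟨q, hbq, hqz⟩ := exists_rat_btwn hb
    have hz : z ∉ closure {x | f x < q} := fun hcl =>
      h q ⟨hcl, fun hint => lt_asymm hqz (interior_subset (s := {x | f x < (q : ℝ)}) hint)⟩
    filter_upwards [isClosed_closure.isOpen_compl.mem_nhds hz] with y hy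
    exact hbq.trans_le (not_lt.1 fun hyq => hy (subset_closure hyq))
  · intro b hb
    obtain ⟨q, hzq, hqb⟩ := exists_rat_btwn hb
    have hz : z ∈ interior {x | f x < q} := by_contra fun hni => h q ⟨subset_closure hzq, hni⟩
    filter_upwards [isOpen_interior.mem_nhds hz] with y hy
    exact (interior_subset (s := {x | f x < (q : ℝ)}) hy).trans hqb

theorem denselyContinuous_of_isNowhereDense_frontier [BaireSpace X] {f : X → ℝ}
    (h : ∀ q : ℚ, IsNowhereDense (frontier {x | f x < q})) : DenselyContinuous f := by
  have hmeagre : IsMeagre (⋃ q : ℚ, frontier {x | f x < q}) :=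
    isMeagre_iUnion fun q => (h q).isMeagre
  refine Dense.mono (fun z hz => ?_) (dense_of_mem_residual hmeagre)
  exact continuousAt_of_forall_notMem_frontier fun q hq => hz (mem_iUnion_of_mem q hq)

theorem IsTopEssInf.isMeagre_setOf_lt {f : X → ℝ} {m : ℝ} (hm : IsTopEssInf f m) :
    IsMeagre {x | f x < m} := by
  have hunion : {x | f x < m} = ⋃ n : ℕ, {x | f x < m - 1 / ((n : ℝ) + 1)} := by
    ext z
    simp only [mem_ofPred_eq, mem_iUnion]
    constructor
    · intro hz
      obtain ⟨n, hn⟩ := exists_nat_one_div_lt (sub_pos.2 hz)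
      exact ⟨n, by linarith⟩
    · rintro ⟨n, hn⟩
      linarith [show (0 : ℝ) < 1 / ((n : ℝ) + 1) by positivity]
  rw [hunion]
  exact isMeagre_iUnion fun n => hm.1 _ (sub_lt_self m (by positivity))

end Topological

/-- A strongly ideally quasiconvex function (all strict sublevel sets `{f < α}` ideally
convex) is quasiconvex, densely continuous, and `{f < m}` is nowhere dense for the
topological essential infimum `m`. -/
theorem stmt_7 {X : Type*} [NormedAddCommGroup X] [NormedSpace ℝ X] [CompleteSpace X]
    (f : X → ℝ) (h : ∀ α : ℝ, IdeallyConvex {x : X | f x < α}) :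
    QuasiconvexFun f ∧ DenselyContinuous f ∧
      ∀ m : ℝ, IsTopEssInf f m → IsNowhereDense {x : X | f x < m} := by
  have hsub : ∀ α, interior (closure {x | f x < α}) ⊆ {x | f x < α} := fun α =>
    (h α).interior_closure_subset
  refine ⟨quasiconvexFun_of_convex_setOf_lt fun α => (h α).convex, ?_, fun m hm => ?_⟩
  · exact denselyContinuous_of_isNowhereDense_frontier fun q =>
      isNowhereDense_frontier_of_interior_closure_subset (hsub q)
  · exact hm.isMeagre_setOf_lt.isNowhereDense_of_interior_closure_subset (hsub m)
end

section
/- Let X be a real Banach space, let f : X → ℝ be quasiconvex and densely continuous, and let m ∈ ℝ be the topological essential infimum of f. Let x ∈ X be a point with f(x) > m at which f is continuous. Then x does not belong to the closure of F'_m = {y ∈ X : f(y) ≤ m}, and there exist an open neighborhood U of x contained in X \ closure(F'_m) and a closed convex cone K ⊆ X with nonempty interior such that f is K-nondecreasing on U. -/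
open Filter Topology Set MeasureTheory

/-!
Choose `m < β < γ < f x`. The set `{f < β}` is nonmeagre, so its closure has nonempty interior,
which contains a point `z` of continuity of `f`; then `f z ≤ β`, so `f < γ` on a ball `B(z, δ)`,
while `f > γ` on a ball around `x`, so `‖x - z‖ ≥ δ`. For `u` near `x` and `w` near `x - z` the
point `u - w` lies in `B(z, δ)`, and quasiconvexity on the segment from `u - w` through `u` to
`u + t • w` forces `f u ≤ f (u + t • w)`. Thus `f` is nondecreasing near `x` along the cone
spanned by `closedBall (x - z) (δ / 2)`, which is closed because this ball misses `0`.
-/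

namespace QuasiconvexFun

variable {X : Type*} [AddCommGroup X] [Module ℝ X] {f : X → ℝ}

/-- `u` is the convex combination `(u + t • w) / (1 + t) + t • (u - w) / (1 + t)`. -/
theorem le_add_smul_of_sub_lt (hq : QuasiconvexFun f) {u w : X} (hw : f (u - w) < f u)
    {t : ℝ} (ht : 0 ≤ t) : f u ≤ f (u + t • w) := by
  have hcomb : (1 + t)⁻¹ • (u + t • w) + (1 - (1 + t)⁻¹) • (u - w) = u := by
    have hinv : (1 + t)⁻¹ * (1 + t) = 1 := inv_mul_cancel₀ (by positivity)
    linear_combination (norm := module) hinv • w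
  have hl : (1 + t)⁻¹ ∈ Icc (0 : ℝ) 1 := ⟨by positivity, inv_le_one_of_one_le₀ (by linarith)⟩
  have := hq (u + t • w) (u - w) _ hl
  rw [hcomb] at this
  exact (le_max_iff.mp this).resolve_right (not_le.mpr hw)

end QuasiconvexFun

section ConeOverBall

variable {X : Type*} [NormedAddCommGroup X] [NormedSpace ℝ X]

/-- The cone `{t • w | t ≥ 0, w ∈ closedBall v ρ}`, written as
`⋃ t ≥ 0, closedBall (t • v) (t * ρ)`. -/
def coneOverBall (v : X) (ρ : ℝ) : Set X :=
  {k | ∃ t : ℝ, 0 ≤ t ∧ ‖k - t • v‖ ≤ t * ρ}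

theorem smul_mem_coneOverBall {v k : X} {ρ a : ℝ} (ha : 0 ≤ a) (hk : k ∈ coneOverBall v ρ) :
    a • k ∈ coneOverBall v ρ := by
  obtain ⟨t, ht, hkt⟩ := hk
  refine ⟨a * t, mul_nonneg ha ht, ?_⟩
  calc ‖a • k - (a * t) • v‖ = a * ‖k - t • v‖ := by
        rw [mul_smul, ← smul_sub, norm_smul, Real.norm_of_nonneg ha]
    _ ≤ a * (t * ρ) := by gcongr
    _ = a * t * ρ := by ring

theorem convex_coneOverBall (v : X) (ρ : ℝ) : Convex ℝ (coneOverBall v ρ) := by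
  rintro k₁ ⟨t₁, ht₁, hk₁⟩ k₂ ⟨t₂, ht₂, hk₂⟩ a b ha hb -
  refine ⟨a * t₁ + b * t₂, by positivity, ?_⟩
  calc ‖a • k₁ + b • k₂ - (a * t₁ + b * t₂) • v‖ = ‖a • (k₁ - t₁ • v) + b • (k₂ - t₂ • v)‖ := by
        congr 1; module
    _ ≤ a * ‖k₁ - t₁ • v‖ + b * ‖k₂ - t₂ • v‖ := by
        refine (norm_add_le _ _).trans_eq ?_
        rw [norm_smul, norm_smul, Real.norm_of_nonneg ha, Real.norm_of_nonneg hb]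
    _ ≤ a * (t₁ * ρ) + b * (t₂ * ρ) := by gcongr
    _ = (a * t₁ + b * t₂) * ρ := by ring

/-- The scale `t` of a point `k` of the cone is at most `‖k‖ / (‖v‖ - ρ)`; this compactness
makes the cone closed. -/
theorem isClosed_coneOverBall {v : X} {ρ : ℝ} (hρ : ρ < ‖v‖) : IsClosed (coneOverBall v ρ) := by
  refine IsSeqClosed.isClosed fun k k₀ hk hlim => ?_
  choose t ht hkt using hk
  obtain ⟨M, hM⟩ : ∃ M, ∀ n, ‖k n‖ ≤ M := by
    obtain ⟨M, hM⟩ := hlim.norm.bddAbove_range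
    exact ⟨M, fun n => hM ⟨n, rfl⟩⟩
  have ht_le : ∀ n, t n ≤ M / (‖v‖ - ρ) := fun n => by
    rw [le_div_iff₀ (sub_pos.mpr hρ)]
    have : t n * ‖v‖ ≤ ‖k n‖ + ‖k n - t n • v‖ :=
      calc t n * ‖v‖ = ‖t n • v‖ := by rw [norm_smul, Real.norm_of_nonneg (ht n)]
        _ ≤ _ := norm_le_norm_add_norm_sub (k n) (t n • v)
    nlinarith [hkt n, hM n]
  obtain ⟨t₀, ht₀, φ, hφ, htφ⟩ :=
    isCompact_Icc.tendsto_subseq (fun n => (⟨ht n, ht_le n⟩ : t n ∈ Icc 0 _))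
  refine ⟨t₀, ht₀.1, le_of_tendsto_of_tendsto' ?_ (htφ.mul_const ρ) fun n => hkt (φ n)⟩
  exact ((hlim.comp hφ.tendsto_atTop).sub (htφ.smul_const v)).norm

theorem isClosedConvexCone_coneOverBall {v : X} {ρ : ℝ} (hρ : ρ < ‖v‖) :
    IsClosedConvexCone (coneOverBall v ρ) :=
  ⟨isClosed_coneOverBall hρ, convex_coneOverBall v ρ, fun _ ha _ hk => smul_mem_coneOverBall ha hk⟩

theorem ball_subset_coneOverBall (v : X) (ρ : ℝ) : Metric.ball v ρ ⊆ coneOverBall v ρ :=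
  fun k hk => ⟨1, zero_le_one, by simpa [dist_eq_norm] using (Metric.mem_ball.mp hk).le⟩

theorem interior_coneOverBall_nonempty (v : X) {ρ : ℝ} (hρ : 0 < ρ) :
    (interior (coneOverBall v ρ)).Nonempty :=
  ⟨v, interior_maximal (ball_subset_coneOverBall v ρ) Metric.isOpen_ball
    (Metric.mem_ball_self hρ)⟩

/-- Every `u + k` with `k` in the cone over `closedBall (x - z) ρ` is reached from `u` by moving
away from a point `u - w` of `ball z (r + ρ)`, where `f` is smaller than on `ball x r`. -/
theorem QuasiconvexFun.kNondecreasingOn_ball {f : X → ℝ} (hq : QuasiconvexFun f) {x z : X}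
    {r ρ γ : ℝ} (hz : ∀ y ∈ Metric.ball z (r + ρ), f y < γ)
    (hx : ∀ u ∈ Metric.ball x r, γ ≤ f u) :
    KNondecreasingOn f (coneOverBall (x - z) ρ) (Metric.ball x r) := by
  rintro u hu k ⟨t, ht, hkt⟩ - -
  rcases ht.eq_or_lt with rfl | ht
  · obtain rfl : k = 0 := by simpa using hkt
    simp
  have hk : k = t • t⁻¹ • k := (smul_inv_smul₀ ht.ne' k).symm
  rw [hk]
  refine hq.le_add_smul_of_sub_lt ((hz _ ?_).trans_le (hx u hu)) ht.le
  have hw : ‖t⁻¹ • k - (x - z)‖ ≤ ρ := by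
    rw [← inv_smul_smul₀ ht.ne' (x - z), ← smul_sub, norm_smul, Real.norm_of_nonneg (by positivity)]
    exact (inv_mul_le_iff₀ ht).mpr hkt
  rw [Metric.mem_ball, dist_eq_norm] at hu ⊢
  calc ‖u - t⁻¹ • k - z‖ = ‖(u - x) - (t⁻¹ • k - (x - z))‖ := by congr 1; abel
    _ ≤ ‖u - x‖ + ‖t⁻¹ • k - (x - z)‖ := norm_sub_le _ _
    _ < r + ρ := by linarith

end ConeOverBall

theorem ContinuousAt.le_of_mem_closure_lt {X : Type*} [TopologicalSpace X] {f : X → ℝ} {z : X}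
    (hf : ContinuousAt f z) {β : ℝ} (hz : z ∈ closure {y | f y < β}) : f z ≤ β := by
  have hsub : f '' {y | f y < β} ⊆ Iic β :=
    image_subset_iff.mpr fun y (hy : f y < β) => show f y ≤ β from hy.le
  exact isClosed_Iic.closure_subset_iff.mpr hsub (hf.continuousWithinAt.mem_closure_image hz)

theorem IsTopEssInf.exists_continuousAt_lt {X : Type*} [TopologicalSpace X] {f : X → ℝ} {m : ℝ}
    (hm : IsTopEssInf f m) (hd : DenselyContinuous f) {α : ℝ} (hα : m < α) :
    ∃ z, ContinuousAt f z ∧ f z < α := by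
  obtain ⟨β, hmβ, hβα⟩ := exists_between hα
  have hβ : (interior (closure {y | f y < β})).Nonempty :=
    nonempty_iff_ne_empty.mpr fun h => hm.2 β hmβ (IsNowhereDense.isMeagre h)
  obtain ⟨z, hzβ, hz⟩ := hd.inter_open_nonempty _ isOpen_interior hβ
  exact ⟨z, hz, (hz.le_of_mem_closure_lt (interior_subset hzβ)).trans_lt hβα⟩

theorem stmt_8_general {X : Type*} [NormedAddCommGroup X] [NormedSpace ℝ X]
    (f : X → ℝ) (hq : QuasiconvexFun f) (hd : DenselyContinuous f)
    (m : ℝ) (hm : IsTopEssInf f m)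
    (x : X) (hx : m < f x) (hc : ContinuousAt f x) :
    x ∉ closure {y : X | f y ≤ m} ∧
    ∃ U : Set X, IsOpen U ∧ x ∈ U ∧ U ⊆ (closure {y : X | f y ≤ m})ᶜ ∧
      ∃ K : Set X, IsClosedConvexCone K ∧ (interior K).Nonempty ∧
        KNondecreasingOn f K U := by
  obtain ⟨γ, hmγ, hγx⟩ := exists_between hx
  obtain ⟨z, hzc, hzγ⟩ := hm.exists_continuousAt_lt hd hmγ
  obtain ⟨r, hr, hxr⟩ := Metric.eventually_nhds_iff_ball.mp (hc.eventually (lt_mem_nhds hγx))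
  obtain ⟨δ, hδ, hzδ⟩ := Metric.eventually_nhds_iff_ball.mp (hzc.eventually (gt_mem_nhds hzγ))
  have hδx : δ ≤ ‖x - z‖ := by
    by_contra! h
    exact (hzδ x (by rwa [Metric.mem_ball, dist_eq_norm])).not_gt hγx
  set U := Metric.ball x (min r (δ / 2))
  have hU : ∀ u ∈ U, γ < f u := fun u hu => hxr u (Metric.ball_subset_ball (min_le_left _ _) hu)
  have hUm : U ⊆ (closure {y | f y ≤ m})ᶜ :=
    (Disjoint.closure_right (disjoint_left.mpr fun u hu (hum : f u ≤ m) =>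
      (hU u hu).not_ge (hum.trans hmγ.le)) Metric.isOpen_ball).subset_compl_right
  have hxU : x ∈ U := Metric.mem_ball_self (lt_min hr (half_pos hδ))
  refine ⟨hUm hxU, U, Metric.isOpen_ball, hxU, hUm, coneOverBall (x - z) (δ / 2),
    isClosedConvexCone_coneOverBall (by linarith), interior_coneOverBall_nonempty _ (half_pos hδ),
    hq.kNondecreasingOn_ball (fun y hy => hzδ y (Metric.ball_subset_ball ?_ hy))
      fun u hu => (hU u hu).le⟩
  linarith [min_le_right r (δ / 2)]

/-- At a point of continuity `x` with `f x > m`, the point lies outside the closure of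
`{f ≤ m}` and `f` is `K`-nondecreasing near `x` for some closed convex cone `K` with
nonempty interior. -/
theorem stmt_8 {X : Type*} [NormedAddCommGroup X] [NormedSpace ℝ X] [CompleteSpace X]
    (f : X → ℝ) (hq : QuasiconvexFun f) (hd : DenselyContinuous f)
    (m : ℝ) (hm : IsTopEssInf f m)
    (x : X) (hx : m < f x) (hc : ContinuousAt f x) :
    x ∉ closure {y : X | f y ≤ m} ∧
    ∃ U : Set X, IsOpen U ∧ x ∈ U ∧ U ⊆ (closure {y : X | f y ≤ m})ᶜ ∧
      ∃ K : Set X, IsClosedConvexCone K ∧ (interior K).Nonempty ∧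
        KNondecreasingOn f K U :=
  stmt_8_general f hq hd m hm x hx hc
end

section
/- Let X be a real Banach space, let f : X → ℝ be quasiconvex, and let m ∈ ℝ be the topological essential infimum of f. If x ∈ X satisfies f(x) < m, then f is not Gâteaux differentiable at x. -/
open Filter Topology Set MeasureTheory

/-!
Pick `α` with `f x < α < m`. The sublevel set `{f < α}` is convex by quasiconvexity, and since
Gâteaux differentiability makes `f` continuous along every line through `x`, it contains a
segment issuing from `x` in every direction. Its homothetic copies about `x` with ratios `n + 1`
therefore cover `X`, so by Baire's theorem it is not meagre, contradicting `α < m`.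
-/

theorem QuasiconvexFun.quasiconvexOn {X : Type*} [AddCommGroup X] [Module ℝ X] {f : X → ℝ}
    (hf : QuasiconvexFun f) : QuasiconvexOn ℝ univ f := by
  refine quasiconvexOn_iff_le_max.2 ⟨convex_univ, fun x _ y _ a b ha hb hab => ?_⟩
  obtain rfl : b = 1 - a := by linarith
  exact hf x y a ⟨ha, by linarith⟩

theorem GateauxDiffAt.tendsto_add_smul {X : Type*} [NormedAddCommGroup X] [NormedSpace ℝ X]
    {f : X → ℝ} {x : X} {L : X →L[ℝ] ℝ} (hf : GateauxDiffAt f x L) (h : X) :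
    Tendsto (fun t : ℝ => f (x + t • h)) (𝓝[≠] 0) (𝓝 (f x)) := by
  have hdiff : Tendsto (fun t : ℝ => (f (x + t • h) - f x) / t * t) (𝓝[≠] 0) (𝓝 (L h * 0)) :=
    (hf h).mul (tendsto_nhdsWithin_of_tendsto_nhds tendsto_id)
  rw [mul_zero] at hdiff
  have hlim := hdiff.add_const (f x)
  rw [zero_add] at hlim
  refine hlim.congr' ?_
  filter_upwards [self_mem_nhdsWithin] with t (ht : t ≠ 0)
  rw [div_mul_cancel₀ _ ht, sub_add_cancel]

theorem Convex.not_isMeagre_of_forall_exists_add_smul_mem {X : Type*} [AddCommGroup X]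
    [Module ℝ X] [TopologicalSpace X] [ContinuousAdd X] [ContinuousConstSMul ℝ X] [BaireSpace X]
    {S : Set X} (hS : Convex ℝ S) {x : X} (hx : x ∈ S)
    (hrad : ∀ h : X, ∃ t : ℝ, 0 < t ∧ x + t • h ∈ S) : ¬ IsMeagre S := by
  intro hmeagre
  let e : ℕ → X ≃ₜ X := fun n =>
    (Homeomorph.smulOfNeZero ((n : ℝ) + 1)⁻¹ (by positivity)).trans (Homeomorph.addLeft x)
  have hcover : (univ : Set X) ⊆ ⋃ n, e n ⁻¹' S := by
    intro h _
    obtain ⟨t, ht, hxt⟩ := hrad h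
    obtain ⟨n, hn⟩ := exists_nat_one_div_lt ht
    refine mem_iUnion.2 ⟨n, ?_⟩
    have hcoef : ((n : ℝ) + 1)⁻¹ / t ∈ Icc (0 : ℝ) 1 :=
      ⟨by positivity, (div_le_one ht).2 (by simpa using hn.le)⟩
    have hmem := hS.add_smul_mem hx (by simpa using hxt) hcoef
    rwa [smul_smul, div_mul_cancel₀ _ ht.ne'] at hmem
  have huniv : IsMeagre (univ : Set X) :=
    (isMeagre_iUnion fun n => hmeagre.preimage_of_isOpenMap (e n).continuous (e n).isOpenMap).mono
      hcover
  exact not_isMeagre_of_isOpen isOpen_univ ⟨x, trivial⟩ huniv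

/-- A quasiconvex function on a Banach space is not Gâteaux differentiable at any point
below its topological essential infimum. -/
theorem stmt_11 {X : Type*} [NormedAddCommGroup X] [NormedSpace ℝ X] [CompleteSpace X]
    (f : X → ℝ) (hq : QuasiconvexFun f) (m : ℝ) (hm : IsTopEssInf f m)
    (x : X) (hx : f x < m) :
    ¬ ∃ L : X →L[ℝ] ℝ, GateauxDiffAt f x L := by
  rintro ⟨L, hL⟩
  obtain ⟨α, hxα, hαm⟩ := exists_between hx
  have hconvex : Convex ℝ {y : X | f y < α} := by
    simpa using hq.quasiconvexOn.convex_lt α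
  have hrad : ∀ h : X, ∃ t : ℝ, 0 < t ∧ x + t • h ∈ {y : X | f y < α} := by
    intro h
    have hnear : ∀ᶠ t in 𝓝[>] (0 : ℝ), f (x + t • h) < α :=
      nhdsWithin_mono _ (fun t (ht : 0 < t) => ht.ne') <|
        (hL.tendsto_add_smul h).eventually (gt_mem_nhds hxα)
    obtain ⟨t, hft, ht⟩ := (hnear.and self_mem_nhdsWithin).exists
    exact ⟨t, ht, hft⟩
  exact hconvex.not_isMeagre_of_forall_exists_add_smul_mem hxα hrad (hm.1 α hαm)
end

section
/- Let X be a real Banach space, let f : X → ℝ be quasiconvex, and let m ∈ ℝ be the topological essential infimum of f. If x ∈ X satisfies f(x) = m and f is Gâteaux differentiable at x with derivative L, then L = 0. -/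
open Filter Topology Set MeasureTheory

/-! If `L v < 0`, then `f (x + q • v) < f x = m` for some small positive rational `q`, so the
open set `{v | L v < 0}` is covered by countably many homothetic copies of the meagre set
`{f < m}`. In a Baire space a meagre open set is empty, hence `L ≥ 0` and, by linearity,
`L = 0`. -/

theorem isMeagre_setOf_lt_of_forall_lt {X : Type*} [TopologicalSpace X] {f : X → ℝ} {m : ℝ}
    (h : ∀ α < m, IsMeagre {x | f x < α}) : IsMeagre {x | f x < m} := by
  have hcover : {x | f x < m} ⊆ ⋃ n : ℕ, {x | f x < m - 1 / (n + 1)} := by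
    intro x hx
    obtain ⟨n, hn⟩ := exists_nat_one_div_lt (K := ℝ) (sub_pos.2 hx)
    exact mem_iUnion.2 ⟨n, show f x < _ by linarith⟩
  refine (isMeagre_iUnion fun n => h _ ?_).mono hcover
  have : (0 : ℝ) < 1 / ((n : ℝ) + 1) := by positivity
  linarith

theorem IsMeagre.preimage_add_smul {𝕜 X : Type*} [Field 𝕜] [TopologicalSpace 𝕜]
    [TopologicalSpace X] [AddCommGroup X] [Module 𝕜 X] [IsTopologicalAddGroup X]
    [ContinuousSMul 𝕜 X] {s : Set X} (hs : IsMeagre s) (x : X) {c : 𝕜} (hc : c ≠ 0) :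
    IsMeagre ((fun v => x + c • v) ⁻¹' s) :=
  let e := (Homeomorph.smulOfNeZero c hc).trans (Homeomorph.addLeft x)
  hs.preimage_of_isOpenMap e.continuous e.isOpenMap

section Gateaux

variable {X : Type*} [NormedAddCommGroup X] [NormedSpace ℝ X] {f : X → ℝ} {x : X}
  {L : X →L[ℝ] ℝ}

theorem GateauxDiffAt.exists_pos_rat_lt (hL : GateauxDiffAt f x L) {v : X} (hv : L v < 0) :
    ∃ q : ℚ, 0 < q ∧ f (x + (q : ℝ) • v) < f x := by
  have hslope : ∀ᶠ t in 𝓝[>] (0 : ℝ), (f (x + t • v) - f x) / t < 0 :=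
    ((hL v).mono_left (nhdsWithin_mono _ fun t ht => ne_of_gt ht)).eventually
      (gt_mem_nhds hv)
  obtain ⟨ε, hε, hball⟩ := (mem_nhdsGT_iff_exists_Ioo_subset' zero_lt_one).1 hslope
  obtain ⟨q, hq0, hqε⟩ := exists_rat_btwn (mem_Ioi.1 hε)
  refine ⟨q, by exact_mod_cast hq0, ?_⟩
  have : (f (x + (q : ℝ) • v) - f x) / q < 0 := hball ⟨hq0, hqε⟩
  linarith [(div_lt_iff₀ hq0).1 this]

theorem GateauxDiffAt.isMeagre_setOf_neg (hL : GateauxDiffAt f x L)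
    (hf : IsMeagre {z | f z < f x}) : IsMeagre {v | L v < 0} := by
  have hcover : {v | L v < 0} ⊆ ⋃ q : {q : ℚ // 0 < q},
      (fun v => x + (q : ℝ) • v) ⁻¹' {z | f z < f x} := by
    intro v hv
    obtain ⟨q, hq0, hq⟩ := hL.exists_pos_rat_lt hv
    exact mem_iUnion.2 ⟨⟨q, hq0⟩, hq⟩
  refine (isMeagre_iUnion fun q => hf.preimage_add_smul x ?_).mono hcover
  exact_mod_cast q.2.ne'

end Gateaux

theorem ContinuousLinearMap.eq_zero_of_isMeagre_setOf_neg {X : Type*}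
    [NormedAddCommGroup X] [NormedSpace ℝ X] [BaireSpace X] (L : X →L[ℝ] ℝ)
    (h : IsMeagre {v | L v < 0}) : L = 0 := by
  have hnonneg : ∀ v, 0 ≤ L v := fun v => not_lt.1 fun hv =>
    not_isMeagre_of_isOpen (isOpen_lt L.continuous continuous_const) ⟨v, hv⟩ h
  ext v
  rw [zero_apply]
  have := hnonneg (-v)
  rw [map_neg] at this
  exact le_antisymm (by linarith) (hnonneg v)

theorem stmt_12_general {X : Type*} [NormedAddCommGroup X] [NormedSpace ℝ X] [CompleteSpace X]
    (f : X → ℝ) (m : ℝ) (hm : IsTopEssInf f m)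
    (x : X) (hx : f x = m) (L : X →L[ℝ] ℝ) (hL : GateauxDiffAt f x L) :
    L = 0 := by
  have hsublevel : IsMeagre {z | f z < f x} := hx ▸ isMeagre_setOf_lt_of_forall_lt hm.1
  exact L.eq_zero_of_isMeagre_setOf_neg (hL.isMeagre_setOf_neg hsublevel)

/-- If a quasiconvex function is Gâteaux differentiable at a point where it equals its
topological essential infimum, the derivative vanishes. -/
theorem stmt_12 {X : Type*} [NormedAddCommGroup X] [NormedSpace ℝ X] [CompleteSpace X]
    (f : X → ℝ) (hq : QuasiconvexFun f) (m : ℝ) (hm : IsTopEssInf f m)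
    (x : X) (hx : f x = m) (L : X →L[ℝ] ℝ) (hL : GateauxDiffAt f x L) :
    L = 0 :=
  stmt_12_general f m hm x hx L hL
end
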